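/- arXiv:math/0701165 — 10 statements merged into one kernel-verified Lean document; each statement's English description precedes it below -/
import Mathlib

section
/- Fix objects Y and Y′ of C and let ψ_X : C(X,Y′) ⟶ [C(Y,X),𝟙] be a morphism of V for every object X. Define τ : C(Y,Y′) ⟶ 𝟙 as the composite λ⁻¹ ≫ (j_Y ⊗ ψ_Y) ≫ ev : C(Y,Y′) ⟶ 𝟙 ⊗ C(Y,Y′) ⟶ C(Y,Y) ⊗ [C(Y,Y),𝟙] ⟶ 𝟙. Then the family (ψ_X)_X is V-natural in X — i.e. for all objects Z, X the equality (id_{C(Y,Z)} ⊗ (μ_{Z,X,Y′} ≫ ψ_Z)) ≫ ev_{C(Y,Z),𝟙} = (μ_{Y,Z,X} ⊗ ψ_X) ≫ ev_{C(Y,X),𝟙} of morphisms C(Y,Z) ⊗ C(Z,X) ⊗ C(X,Y′) ⟶ 𝟙 holds — if and only if for every object X one has ψ_X = curry(μ_{Y,X,Y′} ≫ τ), equivalently (id_{C(Y,X)} ⊗ ψ_X) ≫ ev_{C(Y,X),𝟙} = μ_{Y,X,Y′} ≫ τ : C(Y,X) ⊗ C(X,Y′) ⟶ 𝟙. -/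
open CategoryTheory MonoidalCategory MonoidalClosed

universe w v u

/-- V-naturality in the first variable: for fixed objects `Y`, `Y'` of a `V`-enriched
category `C`, a family of morphisms `ψ X : C(X,Y') ⟶ [C(Y,X),𝟙]` is `V`-natural in `X` iff
each `ψ X` is the currying of `μ ≫ τ`, where `τ : C(Y,Y') ⟶ 𝟙` is the trace
`λ⁻¹ ≫ (j_Y ⊗ ψ Y) ≫ ev`. -/
theorem enriched_natural_in_first_variable
    (V : Type u) [Category.{v} V] [MonoidalCategory V] [SymmetricCategory V]
    [MonoidalClosed V] {C : Type w} [EnrichedCategory V C] (Y Y' : C)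
    (ψ : ∀ X : C, (X ⟶[V] Y') ⟶ (ihom (Y ⟶[V] X)).obj (𝟙_ V)) :
    (∀ Z X : C,
        (α_ (Y ⟶[V] Z) (Z ⟶[V] X) (X ⟶[V] Y')).hom ≫
            ((Y ⟶[V] Z) ◁ (eComp V Z X Y' ≫ ψ Z)) ≫
            (ihom.ev (Y ⟶[V] Z)).app (𝟙_ V) =
          (eComp V Y Z X ⊗ₘ ψ X) ≫ (ihom.ev (Y ⟶[V] X)).app (𝟙_ V)) ↔
      ∀ X : C,
        ψ X =
          MonoidalClosed.curry
            (eComp V Y X Y' ≫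
              ((λ_ (Y ⟶[V] Y')).inv ≫ (eId V Y ⊗ₘ ψ Y) ≫
                (ihom.ev (Y ⟶[V] Y)).app (𝟙_ V))) := by
  have hτ : (λ_ (Y ⟶[V] Y')).inv ≫ (eId V Y ⊗ₘ ψ Y) ≫ (ihom.ev (Y ⟶[V] Y)).app (𝟙_ V)
      = ψ Y ≫ (λ_ _).inv ≫ eId V Y ▷ _ ≫ (ihom.ev (Y ⟶[V] Y)).app (𝟙_ V) := by
    rw [tensorHom_def', Category.assoc, leftUnitor_inv_naturality_assoc]
  constructor
  · intro h X
    have hx := congrArg (fun f =>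
      (((λ_ (Y ⟶[V] X)).inv ≫ eId V Y ▷ _) ▷ (X ⟶[V] Y')) ≫ f) (h Y X)
    apply MonoidalClosed.uncurry_injective
    rw [MonoidalClosed.uncurry_curry, MonoidalClosed.uncurry_eq]
    calc ((Y ⟶[V] X) ◁ ψ X) ≫ (ihom.ev (Y ⟶[V] X)).app (𝟙_ V)
        = (((λ_ (Y ⟶[V] X)).inv ≫ eId V Y ▷ _) ▷ (X ⟶[V] Y')) ≫
            (eComp V Y Y X ⊗ₘ ψ X) ≫ (ihom.ev (Y ⟶[V] X)).app (𝟙_ V) := by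
          rw [MonoidalCategory.tensorHom_def, comp_whiskerRight, Category.assoc, Category.assoc,
            ← comp_whiskerRight_assoc, ← comp_whiskerRight_assoc, Category.assoc,
            e_id_comp, id_whiskerRight, Category.id_comp]
      _ = (((λ_ (Y ⟶[V] X)).inv ≫ eId V Y ▷ _) ▷ (X ⟶[V] Y')) ≫
            (α_ (Y ⟶[V] Y) (Y ⟶[V] X) (X ⟶[V] Y')).hom ≫
            ((Y ⟶[V] Y) ◁ (eComp V Y X Y' ≫ ψ Y)) ≫
            (ihom.ev (Y ⟶[V] Y)).app (𝟙_ V) := hx.symm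
      _ = eComp V Y X Y' ≫
            ((λ_ (Y ⟶[V] Y')).inv ≫ (eId V Y ⊗ₘ ψ Y) ≫
              (ihom.ev (Y ⟶[V] Y)).app (𝟙_ V)) := by
          rw [hτ, comp_whiskerRight, Category.assoc,
            associator_naturality_left_assoc, ← whisker_exchange_assoc,
            ← leftUnitor_tensor_inv_assoc, leftUnitor_inv_naturality_assoc,
            MonoidalCategory.whiskerLeft_comp_assoc, leftUnitor_inv_naturality_assoc]
  · intro h Z X
    have key : ∀ X : C, ((Y ⟶[V] X) ◁ ψ X) ≫ (ihom.ev (Y ⟶[V] X)).app (𝟙_ V)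
        = eComp V Y X Y' ≫ ((λ_ (Y ⟶[V] Y')).inv ≫ (eId V Y ⊗ₘ ψ Y) ≫
            (ihom.ev (Y ⟶[V] Y)).app (𝟙_ V)) := by
      intro X
      rw [← MonoidalClosed.uncurry_eq, h X, MonoidalClosed.uncurry_curry]
    rw [MonoidalCategory.tensorHom_def (eComp V Y Z X) (ψ X), Category.assoc, key X,
      MonoidalCategory.whiskerLeft_comp, Category.assoc, key Z, e_assoc'_assoc]
end

section
/- Let S : C → C be a V-functor, X a fixed object of C, and ψ_Y : C(X,SY) ⟶ [C(Y,X),𝟙] a morphism of V for every object Y; let τ_X : C(X,SX) ⟶ 𝟙 be the composite λ⁻¹ ≫ (j_X ⊗ ψ_X) ≫ ev : C(X,SX) ⟶ 𝟙 ⊗ C(X,SX) ⟶ C(X,X) ⊗ [C(X,X),𝟙] ⟶ 𝟙. Then the family (ψ_Y)_Y is V-natural in Y — i.e. for all objects Y, Z the two morphisms C(Z,X) ⊗ C(X,SY) ⊗ C(Y,Z) ⟶ 𝟙 given by (id ⊗ id ⊗ S_{Y,Z}) ≫ (id ⊗ μ_{X,SY,SZ}) ≫ (id ⊗ ψ_Z)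 ≫ ev_{C(Z,X),𝟙} and by the cyclic symmetry isomorphism C(Z,X) ⊗ C(X,SY) ⊗ C(Y,Z) ≅ C(Y,Z) ⊗ C(Z,X) ⊗ C(X,SY) (built from β) followed by (μ_{Y,Z,X} ⊗ ψ_Y) ≫ ev_{C(Y,X),𝟙} coincide — if and only if for every object Y one has ψ_Y = curry((S_{Y,X} ⊗ id) ≫ β ≫ μ_{X,SY,SX} ≫ τ_X), equivalently (id_{C(Y,X)} ⊗ ψ_Y) ≫ ev_{C(Y,X),𝟙} = (S_{Y,X} ⊗ id_{C(X,SY)}) ≫ β ≫ μ_{X,SY,SX} ≫ τ_X : C(Y,X) ⊗ C(X,SY) ⟶ 𝟙. -/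
open CategoryTheory MonoidalCategory MonoidalClosed

universe w v u

section Aux

variable (V : Type u) [Category.{v} V] [MonoidalCategory V] [SymmetricCategory V]
    {C : Type w} [EnrichedCategory V C]

lemma enriched_nat_core (S : EnrichedFunctor V C C) (X : C)
    (t : (X ⟶[V] S.obj X) ⟶ 𝟙_ V) (Y Z : C) :
    ((Z ⟶[V] X) ◁ ((X ⟶[V] S.obj Y) ◁ S.map Y Z)) ≫
        ((Z ⟶[V] X) ◁ eComp V X (S.obj Y) (S.obj Z)) ≫
        (S.map Z X ▷ (X ⟶[V] S.obj Z)) ≫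
        (β_ (S.obj Z ⟶[V] S.obj X) (X ⟶[V] S.obj Z)).hom ≫
        eComp V X (S.obj Z) (S.obj X) ≫ t =
      (β_ (Z ⟶[V] X) ((X ⟶[V] S.obj Y) ⊗ (Y ⟶[V] Z))).hom ≫
        (α_ (X ⟶[V] S.obj Y) (Y ⟶[V] Z) (Z ⟶[V] X)).hom ≫
        (β_ (X ⟶[V] S.obj Y) ((Y ⟶[V] Z) ⊗ (Z ⟶[V] X))).hom ≫
        (eComp V Y Z X ▷ (X ⟶[V] S.obj Y)) ≫
        (S.map Y X ▷ (X ⟶[V] S.obj Y)) ≫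
        (β_ (S.obj Y ⟶[V] S.obj X) (X ⟶[V] S.obj Y)).hom ≫
        eComp V X (S.obj Y) (S.obj X) ≫ t := by
  conv_lhs =>
    rw [whisker_exchange_assoc, whisker_exchange_assoc,
      BraidedCategory.braiding_naturality_right_assoc,
      BraidedCategory.braiding_naturality_right_assoc,
      ← e_assoc'_assoc,
      associator_naturality_middle_assoc,
      BraidedCategory.braiding_naturality_left_assoc,
      associator_naturality_right_assoc,
      ← MonoidalCategory.whiskerLeft_comp_assoc, ← tensorHom_def']
  conv_rhs =>
    rw [← comp_whiskerRight_assoc, EnrichedFunctor.map_comp,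
      comp_whiskerRight, Category.assoc,
      BraidedCategory.braiding_naturality_left_assoc,
      BraidedCategory.braiding_naturality_left_assoc,
      SymmetricCategory.symmetry_assoc]

end Aux

/-- V-naturality in the second variable: for a `V`-functor `S : C → C`, a fixed object `X`,
and a family of morphisms `ψ Y : C(X,SY) ⟶ [C(Y,X),𝟙]`, the family is `V`-natural in `Y`
iff each `ψ Y` is the currying of `(S ⊗ id) ≫ β ≫ μ ≫ τ_X`, where
`τ_X : C(X,SX) ⟶ 𝟙` is the trace `λ⁻¹ ≫ (j_X ⊗ ψ X) ≫ ev`. -/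
theorem enriched_natural_in_second_variable
    (V : Type u) [Category.{v} V] [MonoidalCategory V] [SymmetricCategory V]
    [MonoidalClosed V] {C : Type w} [EnrichedCategory V C]
    (S : EnrichedFunctor V C C) (X : C)
    (ψ : ∀ Y : C, (X ⟶[V] S.obj Y) ⟶ (ihom (Y ⟶[V] X)).obj (𝟙_ V)) :
    (∀ Y Z : C,
        ((Z ⟶[V] X) ◁ ((X ⟶[V] S.obj Y) ◁ S.map Y Z)) ≫
            ((Z ⟶[V] X) ◁ eComp V X (S.obj Y) (S.obj Z)) ≫
            ((Z ⟶[V] X) ◁ ψ Z) ≫ (ihom.ev (Z ⟶[V] X)).app (𝟙_ V) =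
          (β_ (Z ⟶[V] X) ((X ⟶[V] S.obj Y) ⊗ (Y ⟶[V] Z))).hom ≫
            (α_ (X ⟶[V] S.obj Y) (Y ⟶[V] Z) (Z ⟶[V] X)).hom ≫
            (β_ (X ⟶[V] S.obj Y) ((Y ⟶[V] Z) ⊗ (Z ⟶[V] X))).hom ≫
            (eComp V Y Z X ⊗ₘ ψ Y) ≫ (ihom.ev (Y ⟶[V] X)).app (𝟙_ V)) ↔
      ∀ Y : C,
        ψ Y =
          MonoidalClosed.curry
            ((S.map Y X ⊗ₘ 𝟙 (X ⟶[V] S.obj Y)) ≫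
              (β_ (S.obj Y ⟶[V] S.obj X) (X ⟶[V] S.obj Y)).hom ≫
              eComp V X (S.obj Y) (S.obj X) ≫
              ((λ_ (X ⟶[V] S.obj X)).inv ≫ (eId V X ⊗ₘ ψ X) ≫
                (ihom.ev (X ⟶[V] X)).app (𝟙_ V))) := by
  constructor
  · intro h Y
    rw [MonoidalClosed.eq_curry_iff, uncurry_eq]
    have hρ : ((Y ⟶[V] X) ◁ eId V X) ≫ eComp V Y X X = (ρ_ (Y ⟶[V] X)).hom := by
      have h2 := e_comp_id V Y X
      rw [Iso.inv_comp_eq, Category.comp_id] at h2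
      exact h2
    have key := congrArg (fun k => (λ_ ((X ⟶[V] S.obj Y) ⊗ (Y ⟶[V] X))).inv ≫
      (eId V X ▷ ((X ⟶[V] S.obj Y) ⊗ (Y ⟶[V] X))) ≫ k) (h Y X)
    -- rewrite the LHS of key
    rw [← whisker_exchange_assoc, ← whisker_exchange_assoc, ← whisker_exchange_assoc,
      ← leftUnitor_inv_naturality_assoc, ← leftUnitor_inv_naturality_assoc,
      ← leftUnitor_inv_naturality_assoc] at key
    -- rewrite the RHS of key
    rw [tensorHom_def (eComp V Y X X) (ψ Y),
      BraidedCategory.braiding_naturality_left_assoc (eId V X),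
      leftUnitor_inv_braiding_assoc,
      associator_naturality_right_assoc,
      BraidedCategory.braiding_naturality_right_assoc,
      Category.assoc, ← comp_whiskerRight_assoc, hρ,
      ← BraidedCategory.braiding_naturality_right_assoc,
      ← rightUnitor_tensor_hom_assoc, Iso.inv_hom_id_assoc] at key
    -- now key : g1 ≫ g2 ≫ ψX ≫ λ⁻¹ ≫ (eId ▷ _) ≫ ev = β ≫ (◁ ψ Y) ≫ ev
    rw [← cancel_epi (β_ (X ⟶[V] S.obj Y) (Y ⟶[V] X)).hom]
    rw [← key, tensorHom_id,
      BraidedCategory.braiding_naturality_left_assoc (S.map Y X),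
      SymmetricCategory.symmetry_assoc]
    rw [tensorHom_def' (eId V X) (ψ X)]
    simp only [Category.assoc]
    rw [← leftUnitor_inv_naturality_assoc]
  · intro h Y Z
    have hu : ∀ W : C, ((W ⟶[V] X) ◁ ψ W) ≫ (ihom.ev (W ⟶[V] X)).app (𝟙_ V) =
        (S.map W X ⊗ₘ 𝟙 (X ⟶[V] S.obj W)) ≫
          (β_ (S.obj W ⟶[V] S.obj X) (X ⟶[V] S.obj W)).hom ≫
          eComp V X (S.obj W) (S.obj X) ≫
          ((λ_ (X ⟶[V] S.obj X)).inv ≫ (eId V X ⊗ₘ ψ X) ≫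
            (ihom.ev (X ⟶[V] X)).app (𝟙_ V)) := by
      intro W
      rw [← uncurry_eq]
      exact (MonoidalClosed.eq_curry_iff _ _).mp (h W)
    rw [hu Z, MonoidalCategory.tensorHom_def_assoc (eComp V Y Z X) (ψ Y), hu Y,
      tensorHom_id, tensorHom_id]
    exact enriched_nat_core V S X _ Y Z
end

section
/- Let S : C → C be a V-functor and ψ_{X,Y} : C(X,SY) ⟶ [C(Y,X),𝟙] a family of morphisms satisfying the two trace equations (id ⊗ ψ_{X,Y}) ≫ ev = μ_{Y,X,SY} ≫ τ_Y and (id ⊗ ψ_{X,Y}) ≫ ev = (S_{Y,X} ⊗ id) ≫ β ≫ μ_{X,SY,SX} ≫ τ_X for all objects X, Y. For an object M of V let e_M : M ⟶ [[M,𝟙],𝟙] be the currying of β_{[M,𝟙],M} ≫ ev_{M,𝟙} : [M,𝟙] ⊗ M ⟶ 𝟙. Then for all objects X, Y the square commutes: e_{C(Y,X)} ≫ [ψ_{X,Y},𝟙] = S_{Y,X} ≫ ψ_{SY,X} : C(Y,X) ⟶ [C(X,SY),𝟙], where [ψ_{X,Y},𝟙] : [[C(Y,X),𝟙],𝟙]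 ⟶ [C(X,SY),𝟙] is internal precomposition with ψ_{X,Y} (Mathlib: MonoidalClosed.pre). In particular, if every ψ_{X,Y} is an isomorphism and every hom-object C(Y,X) is reflexive (i.e. e_{C(Y,X)} is an isomorphism), then every component S_{Y,X} is an isomorphism in V, i.e. S is fully faithful. -/
open CategoryTheory MonoidalCategory MonoidalClosed

universe w v u

variable (V : Type u) [Category.{v} V] [MonoidalCategory V] [SymmetricCategory V]
  [MonoidalClosed V]

/-- The canonical morphism `e : M ⟶ [[M,𝟙],𝟙]` from an object to its double dual, given by
currying `β ≫ ev : [M,𝟙] ⊗ M ⟶ 𝟙`.  `M` is called reflexive when this is an isomorphism. -/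
noncomputable def doubleDualUnit (M : V) :
    M ⟶ (ihom ((ihom M).obj (𝟙_ V))).obj (𝟙_ V) :=
  MonoidalClosed.curry ((β_ ((ihom M).obj (𝟙_ V)) M).hom ≫ (ihom.ev M).app (𝟙_ V))

/-- For a `V`-functor `S : C → C` with a family `ψ` satisfying the two trace equations of a
right Serre `V`-functor, the square `e ≫ [ψ,𝟙] = S ≫ ψ` commutes; in particular if all
`ψ X Y` are isomorphisms and all hom-objects are reflexive, then all components of `S` are
isomorphisms, i.e. `S` is fully faithful. -/
theorem rightSerre_enriched_square_and_fully_faithful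
    {C : Type w} [EnrichedCategory V C] (S : EnrichedFunctor V C C)
    (ψ : ∀ X Y : C, (X ⟶[V] S.obj Y) ⟶ (ihom (Y ⟶[V] X)).obj (𝟙_ V))
    (τ : ∀ Y : C, (Y ⟶[V] S.obj Y) ⟶ 𝟙_ V)
    (hτ : ∀ Y : C, τ Y = (λ_ (Y ⟶[V] S.obj Y)).inv ≫ (eId V Y ⊗ₘ ψ Y Y) ≫
        (ihom.ev (Y ⟶[V] Y)).app (𝟙_ V))
    (h₁ : ∀ X Y : C,
      ((Y ⟶[V] X) ◁ ψ X Y) ≫ (ihom.ev (Y ⟶[V] X)).app (𝟙_ V) =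
        eComp V Y X (S.obj Y) ≫ τ Y)
    (h₂ : ∀ X Y : C,
      ((Y ⟶[V] X) ◁ ψ X Y) ≫ (ihom.ev (Y ⟶[V] X)).app (𝟙_ V) =
        (S.map Y X ▷ (X ⟶[V] S.obj Y)) ≫
          (β_ (S.obj Y ⟶[V] S.obj X) (X ⟶[V] S.obj Y)).hom ≫
          eComp V X (S.obj Y) (S.obj X) ≫ τ X) :
    (∀ X Y : C,
        doubleDualUnit V (Y ⟶[V] X) ≫ (MonoidalClosed.pre (ψ X Y)).app (𝟙_ V) =
          S.map Y X ≫ ψ (S.obj Y) X) ∧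
      ((∀ X Y : C, IsIso (ψ X Y)) →
        (∀ X Y : C, IsIso (doubleDualUnit V (Y ⟶[V] X))) →
        ∀ Y X : C, IsIso (S.map Y X)) := by
  have key : ∀ X Y : C,
      doubleDualUnit V (Y ⟶[V] X) ≫ (MonoidalClosed.pre (ψ X Y)).app (𝟙_ V) =
        S.map Y X ≫ ψ (S.obj Y) X := by
    intro X Y
    set A := (Y ⟶[V] X)
    set B := (X ⟶[V] S.obj Y)
    apply MonoidalClosed.uncurry_injective
    have lhs : MonoidalClosed.uncurry
        (doubleDualUnit V A ≫ (MonoidalClosed.pre (ψ X Y)).app (𝟙_ V)) =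
        (B ◁ S.map Y X) ≫ eComp V X (S.obj Y) (S.obj X) ≫ τ X := by
      rw [MonoidalClosed.uncurry_natural_left, MonoidalClosed.uncurry_pre]
      calc (B ◁ doubleDualUnit V A) ≫
            (ψ X Y ▷ _) ≫ (ihom.ev ((ihom A).obj (𝟙_ V))).app (𝟙_ V)
          = (ψ X Y ▷ A) ≫ ((ihom A).obj (𝟙_ V) ◁ doubleDualUnit V A) ≫
              (ihom.ev ((ihom A).obj (𝟙_ V))).app (𝟙_ V) := by
            rw [← Category.assoc, whisker_exchange, Category.assoc]
        _ = (ψ X Y ▷ A) ≫ MonoidalClosed.uncurry (doubleDualUnit V A) := by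
            rw [MonoidalClosed.uncurry_eq]
        _ = (ψ X Y ▷ A) ≫ (β_ ((ihom A).obj (𝟙_ V)) A).hom ≫
              (ihom.ev A).app (𝟙_ V) := by
            rw [doubleDualUnit, MonoidalClosed.uncurry_curry]
        _ = (β_ B A).hom ≫ (A ◁ ψ X Y) ≫ (ihom.ev A).app (𝟙_ V) := by
            rw [← Category.assoc, BraidedCategory.braiding_naturality_left,
              Category.assoc]
        _ = (β_ B A).hom ≫ (S.map Y X ▷ B) ≫
              (β_ (S.obj Y ⟶[V] S.obj X) B).hom ≫
              eComp V X (S.obj Y) (S.obj X) ≫ τ X := by rw [h₂ X Y]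
        _ = (B ◁ S.map Y X) ≫ (β_ B (S.obj Y ⟶[V] S.obj X)).hom ≫
              (β_ (S.obj Y ⟶[V] S.obj X) B).hom ≫
              eComp V X (S.obj Y) (S.obj X) ≫ τ X := by
            rw [← Category.assoc, ← BraidedCategory.braiding_naturality_right,
              Category.assoc]
        _ = (B ◁ S.map Y X) ≫ eComp V X (S.obj Y) (S.obj X) ≫ τ X := by
            rw [← Category.assoc (f := (β_ _ _).hom), SymmetricCategory.symmetry,
              Category.id_comp]
    rw [lhs, MonoidalClosed.uncurry_natural_left, MonoidalClosed.uncurry_eq,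
      h₁ (S.obj Y) X]
  refine ⟨key, fun hψ he Y X => ?_⟩
  have h := key X Y
  haveI : IsIso (MonoidalClosed.pre (ψ X Y)) :=
    ⟨MonoidalClosed.pre (inv (ψ X Y)), by simp [← MonoidalClosed.pre_map],
      by simp [← MonoidalClosed.pre_map]⟩
  have : S.map Y X =
      (doubleDualUnit V (Y ⟶[V] X) ≫ (MonoidalClosed.pre (ψ X Y)).app (𝟙_ V)) ≫
        inv (ψ (S.obj Y) X) := by
    rw [h, Category.assoc, IsIso.hom_inv_id, Category.comp_id]
  rw [this]
  infer_instance
end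

section
/- Base change preserves right Serre functors: let V and W be symmetric monoidal closed categories and F : V ⥤ W a lax symmetric monoidal functor with unit morphism ε : 𝟙_W ⟶ F(𝟙_V) and multiplication μ^F_{v,w} : F v ⊗ F w ⟶ F(v ⊗ w). Let C be a V-enriched category and F_*C the W-enriched category obtained by transporting the enrichment along F (in Mathlib: TransportEnrichment), with hom-objects F(C(X,Y)), identities ε ≫ F(j_X) and compositions μ^F ≫ F(μ). Assume ε is an isomorphism, and for each object v of V let ζ_v : F([v,𝟙_V]) ⟶ [F v, 𝟙_W] be the currying of μ^F_{v,[v,𝟙_V]} ≫ F(ev_{v,𝟙_V}) ≫ ε⁻¹ : F v ⊗ F([v,𝟙_V]) ⟶ 𝟙_W; assume every ζ_v is an isomorphism. If (S,ψ) is a right Serre V-functor on C, then the object map of S together with the morphisms F(S_{X,Y}) is a W-functor F_*S on F_*C, each ψ^F_{X,Y} := F(ψ_{X,Y}) ≫ ζ_{C(Y,X)} : F(C(X,SY)) ⟶ [F(C(Y,X)),𝟙_W] is an isomorphism in W, and (F_*S, ψ^F) is a right Serre W-functor on F_*C. -/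
open CategoryTheory MonoidalCategory MonoidalClosed Functor.LaxMonoidal

universe w v u v' u'

variable (V : Type u) [Category.{v} V] [MonoidalCategory V] [SymmetricCategory V]
  [MonoidalClosed V]
  (W : Type u') [Category.{v'} W] [MonoidalCategory W] [SymmetricCategory W]
  [MonoidalClosed W]

/-- The trace functional `τ Y := λ⁻¹ ≫ (j_Y ⊗ ψ Y Y) ≫ ev : C(Y,SY) ⟶ 𝟙` associated to a
family `ψ X Y : C(X,SY) ⟶ [C(Y,X),𝟙]`. -/
noncomputable def eSerreTrace {C : Type w} [EnrichedCategory V C]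
    (S : EnrichedFunctor V C C)
    (ψ : ∀ X Y : C, (X ⟶[V] S.obj Y) ⟶ (ihom (Y ⟶[V] X)).obj (𝟙_ V)) (Y : C) :
    (Y ⟶[V] S.obj Y) ⟶ 𝟙_ V :=
  (λ_ (Y ⟶[V] S.obj Y)).inv ≫ (eId V Y ⊗ₘ ψ Y Y) ≫ (ihom.ev (Y ⟶[V] Y)).app (𝟙_ V)

variable {V W} (F : V ⥤ W) [F.LaxBraided]

/-- The comparison morphism `ζ v : F [v,𝟙] ⟶ [F v, 𝟙]` of a lax symmetric monoidal functor
`F` whose unit morphism `ε` is invertible, given by currying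
`μ ≫ F(ev) ≫ ε⁻¹ : F v ⊗ F [v,𝟙] ⟶ 𝟙`. -/
noncomputable def baseChangeZeta [IsIso (ε F)] (v : V) :
    F.obj ((ihom v).obj (𝟙_ V)) ⟶ (ihom (F.obj v)).obj (𝟙_ W) :=
  MonoidalClosed.curry
    (μ F v ((ihom v).obj (𝟙_ V)) ≫ F.map ((ihom.ev v).app (𝟙_ V)) ≫ inv (ε F))

/-- The base-changed Serre morphisms `ψ^F X Y := F (ψ X Y) ≫ ζ : F C(X,SY) ⟶ [F C(Y,X), 𝟙]`,
for the transported enrichment (`TransportEnrichment F C`), whose hom-objects are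
`F C(X,Y)`, with identities `ε ≫ F j` and compositions `μ ≫ F μ`. -/
noncomputable def baseChangePsi [IsIso (ε F)] {C : Type w} [EnrichedCategory V C]
    (S : EnrichedFunctor V C C)
    (ψ : ∀ X Y : C, (X ⟶[V] S.obj Y) ⟶ (ihom (Y ⟶[V] X)).obj (𝟙_ V)) (X Y : C) :
    F.obj (X ⟶[V] S.obj Y) ⟶ (ihom (F.obj (Y ⟶[V] X))).obj (𝟙_ W) :=
  F.map (ψ X Y) ≫ baseChangeZeta F (Y ⟶[V] X)

/-- The trace functionals of the base-changed family `ψ^F` in the transported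
`W`-enriched category. -/
noncomputable def baseChangeTrace [IsIso (ε F)] {C : Type w} [EnrichedCategory V C]
    (S : EnrichedFunctor V C C)
    (ψ : ∀ X Y : C, (X ⟶[V] S.obj Y) ⟶ (ihom (Y ⟶[V] X)).obj (𝟙_ V)) (Y : C) :
    F.obj (Y ⟶[V] S.obj Y) ⟶ 𝟙_ W :=
  (λ_ (F.obj (Y ⟶[V] S.obj Y))).inv ≫
    ((ε F ≫ F.map (eId V Y)) ⊗ₘ baseChangePsi F S ψ Y Y) ≫
    (ihom.ev (F.obj (Y ⟶[V] Y))).app (𝟙_ W)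


lemma baseChangeZeta_uncurry [IsIso (ε F)] {A B : V} (f : A ⟶ (ihom B).obj (𝟙_ V)) :
    (F.obj B ◁ (F.map f ≫ baseChangeZeta F B)) ≫ (ihom.ev (F.obj B)).app (𝟙_ W) =
      μ F B A ≫ F.map ((B ◁ f) ≫ (ihom.ev B).app (𝟙_ V)) ≫ inv (ε F) := by
  have : (F.obj B ◁ (F.map f ≫ baseChangeZeta F B)) ≫ (ihom.ev (F.obj B)).app (𝟙_ W) =
      MonoidalClosed.uncurry (F.map f ≫ baseChangeZeta F B) := by
    rw [MonoidalClosed.uncurry_eq]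
  rw [this, MonoidalClosed.uncurry_natural_left, baseChangeZeta,
    MonoidalClosed.uncurry_curry, Functor.LaxMonoidal.μ_natural_right_assoc,
    F.map_comp]
  simp

lemma baseChangeTrace_eq [IsIso (ε F)] {C : Type w} [EnrichedCategory V C]
    (S : EnrichedFunctor V C C)
    (ψ : ∀ X Y : C, (X ⟶[V] S.obj Y) ⟶ (ihom (Y ⟶[V] X)).obj (𝟙_ V)) (Y : C) :
    baseChangeTrace F S ψ Y = F.map (eSerreTrace V S ψ Y) ≫ inv (ε F) := by
  rw [baseChangeTrace, eSerreTrace, baseChangePsi, MonoidalCategory.tensorHom_def, Category.assoc,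
    baseChangeZeta_uncurry]
  simp only [F.map_comp, comp_whiskerRight, Category.assoc,
    Functor.LaxMonoidal.μ_natural_left_assoc,
    Functor.LaxMonoidal.left_unitality_inv_assoc]
  rw [MonoidalCategory.tensorHom_def]
  simp only [F.map_comp, Category.assoc]

/-- Base change preserves right Serre functors: if `(S,ψ)` is a right Serre `V`-functor on
`C`, `F : V ⥤ W` is lax symmetric monoidal with invertible unit morphism, and all comparison
morphisms `ζ v` are isomorphisms, then `F S` is a `W`-functor on the transported `W`-enriched
category (with hom-objects `F C(X,Y)`, identities `ε ≫ F j`, compositions `μ ≫ F μ`), all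
`ψ^F X Y = F (ψ X Y) ≫ ζ` are isomorphisms, and `(F S, ψ^F)` is a right Serre `W`-functor. -/
theorem rightSerre_enriched_base_change [IsIso (ε F)]
    (hζ : ∀ v : V, IsIso (baseChangeZeta F v))
    {C : Type w} [EnrichedCategory V C]
    (S : EnrichedFunctor V C C)
    (ψ : ∀ X Y : C, (X ⟶[V] S.obj Y) ⟶ (ihom (Y ⟶[V] X)).obj (𝟙_ V))
    (hiso : ∀ X Y : C, IsIso (ψ X Y))
    (h₁ : ∀ X Y : C,
      ((Y ⟶[V] X) ◁ ψ X Y) ≫ (ihom.ev (Y ⟶[V] X)).app (𝟙_ V) =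
        eComp V Y X (S.obj Y) ≫ eSerreTrace V S ψ Y)
    (h₂ : ∀ X Y : C,
      ((Y ⟶[V] X) ◁ ψ X Y) ≫ (ihom.ev (Y ⟶[V] X)).app (𝟙_ V) =
        (S.map Y X ▷ (X ⟶[V] S.obj Y)) ≫
          (β_ (S.obj Y ⟶[V] S.obj X) (X ⟶[V] S.obj Y)).hom ≫
          eComp V X (S.obj Y) (S.obj X) ≫ eSerreTrace V S ψ X) :
    -- `F S` is a `W`-functor on the transported category: it preserves identities ...
    (∀ X : C,
      (ε F ≫ F.map (eId V X)) ≫ F.map (S.map X X) = ε F ≫ F.map (eId V (S.obj X))) ∧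
    -- ... and compositions
    (∀ X Y Z : C,
      (μ F (X ⟶[V] Y) (Y ⟶[V] Z) ≫ F.map (eComp V X Y Z)) ≫ F.map (S.map X Z) =
        (F.map (S.map X Y) ⊗ₘ F.map (S.map Y Z)) ≫
          (μ F (S.obj X ⟶[V] S.obj Y) (S.obj Y ⟶[V] S.obj Z) ≫
            F.map (eComp V (S.obj X) (S.obj Y) (S.obj Z)))) ∧
    -- each `ψ^F X Y` is an isomorphism ...
    (∀ X Y : C, IsIso (baseChangePsi F S ψ X Y)) ∧
    -- ... and `(F S, ψ^F)` satisfies the two trace equations of a right Serre `W`-functor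
    (∀ X Y : C,
      (F.obj (Y ⟶[V] X) ◁ baseChangePsi F S ψ X Y) ≫
          (ihom.ev (F.obj (Y ⟶[V] X))).app (𝟙_ W) =
        (μ F (Y ⟶[V] X) (X ⟶[V] S.obj Y) ≫ F.map (eComp V Y X (S.obj Y))) ≫
          baseChangeTrace F S ψ Y) ∧
    (∀ X Y : C,
      (F.obj (Y ⟶[V] X) ◁ baseChangePsi F S ψ X Y) ≫
          (ihom.ev (F.obj (Y ⟶[V] X))).app (𝟙_ W) =
        (F.map (S.map Y X) ▷ F.obj (X ⟶[V] S.obj Y)) ≫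
          (β_ (F.obj (S.obj Y ⟶[V] S.obj X)) (F.obj (X ⟶[V] S.obj Y))).hom ≫
          (μ F (X ⟶[V] S.obj Y) (S.obj Y ⟶[V] S.obj X) ≫
            F.map (eComp V X (S.obj Y) (S.obj X))) ≫
          baseChangeTrace F S ψ X) := by

  refine ⟨?_, ?_, ?_, ?_, ?_⟩
  · intro X
    rw [Category.assoc, ← F.map_comp, S.map_id]
  · intro X Y Z
    rw [Category.assoc, ← F.map_comp, S.map_comp, F.map_comp,
      Functor.LaxMonoidal.μ_natural_assoc]
  · intro X Y
    have := hζ (Y ⟶[V] X)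
    have := hiso X Y
    rw [baseChangePsi]
    infer_instance
  · intro X Y
    simp only [baseChangePsi, baseChangeZeta_uncurry, baseChangeTrace_eq, h₁ X Y]
    simp only [F.map_comp, Category.assoc]
  · intro X Y
    simp only [baseChangePsi, baseChangeZeta_uncurry, baseChangeTrace_eq, h₂ X Y]
    simp only [F.map_comp, Category.assoc]
    rw [← Functor.LaxMonoidal.μ_natural_left_assoc,
      Functor.LaxBraided.braided_assoc]
end

section
/- Existence criterion for Serre functors on k-linear categories: for each object Y of C let D_Y : Cᵒᵖ ⥤ ModuleCat k be the functor with D_Y(X) = Module.Dual k (Y ⟶ X), sending a morphism a : X′ ⟶ X of C to the k-linear map Module.Dual k (Y ⟶ X) ⟶ Module.Dual k (Y ⟶ X′), ξ ↦ (g ↦ ξ(g ≫ a)). Then C admits a right Serre k-functor if and only if for every object Y there exist an object Z of C and an isomorphism (linearYoneda k C).obj Z ≅ D_Y in the functor category Cᵒᵖ ⥤ ModuleCat k (i.e. k-linear isomorphisms (X ⟶ Z) ≅ Module.Dual k (Y ⟶ X) natural in X). -/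
open CategoryTheory Opposite

universe v u

variable (k : Type v) [CommRing k] {C : Type u} [Category.{v} C] [Preadditive C]
  [CategoryTheory.Linear k C]

noncomputable def serreDualPresheaf (Y : C) : Cᵒᵖ ⥤ ModuleCat k where
  obj X := ModuleCat.of k (Module.Dual k (Y ⟶ X.unop))
  map a := ModuleCat.ofHom (LinearMap.dualMap (Linear.rightComp k Y a.unop))
  map_id X := congrArg ModuleCat.ofHom
    (show LinearMap.dualMap (Linear.rightComp k Y (𝟙 (Opposite.unop X))) =
        (LinearMap.id : Module.Dual k (Y ⟶ Opposite.unop X) →ₗ[k] _) from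
      LinearMap.ext fun ξ => LinearMap.ext fun g => by simp)
  map_comp {X X' X''} f g := congrArg ModuleCat.ofHom
    (show LinearMap.dualMap (Linear.rightComp k Y ((f ≫ g).unop)) =
        ((Linear.rightComp k Y g.unop).dualMap).comp
          ((Linear.rightComp k Y f.unop).dualMap) from
      LinearMap.ext fun ξ => LinearMap.ext fun x => by simp)

/-- Existence criterion for right Serre k-functors: `C` admits a right Serre k-functor iff
for every object `Y` the presheaf `X ↦ Module.Dual k (Y ⟶ X)` is representable as a
`ModuleCat k`-valued presheaf, i.e. isomorphic to `(linearYoneda k C).obj Z` for some `Z`. -/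
theorem rightSerre_linear_exists_iff_representable :
    (∃ (S : C ⥤ C) (ψ : ∀ X Y : C, (X ⟶ S.obj Y) ≃ₗ[k] Module.Dual k (Y ⟶ X)),
      (∀ (X Y : C) (f g : X ⟶ Y), S.map (f + g) = S.map f + S.map g) ∧
      (∀ (X Y : C) (r : k) (f : X ⟶ Y), S.map (r • f) = r • S.map f) ∧
      (∀ (X Z Y : C) (x : Z ⟶ X) (f : X ⟶ S.obj Y) (z : Y ⟶ Z),
        ψ Z Y (x ≫ f) z = ψ X Y f (z ≫ x)) ∧
      (∀ (X Y Z : C) (y : Y ⟶ Z) (f : X ⟶ S.obj Y) (h : Z ⟶ X),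
        ψ X Z (f ≫ S.map y) h = ψ X Y f (y ≫ h))) ↔
    ∀ Y : C, ∃ Z : C, Nonempty ((linearYoneda k C).obj Z ≅ serreDualPresheaf k Y) := by
  constructor
  · rintro ⟨S, ψ, -, -, h3, -⟩ Y
    refine ⟨S.obj Y, ⟨NatIso.ofComponents (fun X => (ψ X.unop Y).toModuleIso) ?_⟩⟩
    intro X X' a
    refine ModuleCat.hom_ext (LinearMap.ext fun f => LinearMap.ext fun z => ?_)
    exact h3 X.unop X'.unop Y a.unop f z
  · intro hrep
    choose Z hZ using hrep
    have e : ∀ Y : C, (linearYoneda k C).obj (Z Y) ≅ serreDualPresheaf k Y :=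
      fun Y => (hZ Y).some
    let φ : ∀ (X Y : C), (X ⟶ Z Y) ≃ₗ[k] Module.Dual k (Y ⟶ X) :=
      fun X Y => ((e Y).app (op X)).toLinearEquiv
    have hnat : ∀ (X W Y : C) (x : W ⟶ X) (f : X ⟶ Z Y) (z : Y ⟶ W),
        φ W Y (x ≫ f) z = φ X Y f (z ≫ x) := by
      intro X W Y x f z
      have h2 : φ W Y (x ≫ f) =
          LinearMap.dualMap (Linear.rightComp k Y x) (φ X Y f) :=
        LinearMap.congr_fun (congrArg ModuleCat.Hom.hom ((e Y).hom.naturality x.op)) f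
      exact LinearMap.congr_fun h2 z
    let Smap : ∀ {Y Y' : C}, (Y ⟶ Y') → (Z Y ⟶ Z Y') := fun {Y Y'} y =>
      (φ (Z Y) Y').symm (((φ (Z Y) Y) (𝟙 (Z Y))).comp (Linear.leftComp k (Z Y) y))
    have hφS : ∀ {Y Y' : C} (y : Y ⟶ Y') (h : Y' ⟶ Z Y),
        φ (Z Y) Y' (Smap y) h = φ (Z Y) Y (𝟙 (Z Y)) (y ≫ h) := by
      intro Y Y' y h
      show (φ (Z Y) Y') ((φ (Z Y) Y').symm
        (((φ (Z Y) Y) (𝟙 (Z Y))).comp (Linear.leftComp k (Z Y) y))) h = _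
      rw [LinearEquiv.apply_symm_apply]
      rfl
    have key : ∀ (X Y Y' : C) (y : Y ⟶ Y') (f : X ⟶ Z Y) (h : Y' ⟶ X),
        φ X Y' (f ≫ Smap y) h = φ X Y f (y ≫ h) := by
      intro X Y Y' y f h
      calc φ X Y' (f ≫ Smap y) h = φ (Z Y) Y' (Smap y) (h ≫ f) :=
            hnat (Z Y) X Y' f (Smap y) h
        _ = φ (Z Y) Y (𝟙 (Z Y)) (y ≫ h ≫ f) := hφS y (h ≫ f)
        _ = φ (Z Y) Y (𝟙 (Z Y)) ((y ≫ h) ≫ f) := by rw [Category.assoc]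
        _ = φ X Y f (y ≫ h) := by
            simpa using (hnat (Z Y) X Y f (𝟙 (Z Y)) (y ≫ h)).symm
    refine ⟨{ obj := Z, map := Smap, map_id := ?_, map_comp := ?_ },
      fun X Y => φ X Y, ?_, ?_, ?_, ?_⟩
    · intro Y
      refine (φ (Z Y) Y).injective (LinearMap.ext fun h => ?_)
      calc φ (Z Y) Y (Smap (𝟙 Y)) h = φ (Z Y) Y (𝟙 (Z Y)) (𝟙 Y ≫ h) := hφS (𝟙 Y) h
        _ = φ (Z Y) Y (𝟙 (Z Y)) h := by rw [Category.id_comp]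
    · intro Y Y' Y'' y y'
      refine (φ (Z Y) Y'').injective (LinearMap.ext fun h => ?_)
      calc φ (Z Y) Y'' (Smap (y ≫ y')) h
          = φ (Z Y) Y (𝟙 (Z Y)) ((y ≫ y') ≫ h) := hφS (y ≫ y') h
        _ = φ (Z Y) Y (𝟙 (Z Y)) (y ≫ y' ≫ h) := by rw [Category.assoc]
        _ = φ (Z Y) Y' (Smap y) (y' ≫ h) := (hφS y (y' ≫ h)).symm
        _ = φ (Z Y) Y'' (Smap y ≫ Smap y') h := (key (Z Y) Y' Y'' y' (Smap y) h).symm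
    · intro Y Y' f g
      refine (φ (Z Y) Y').injective (LinearMap.ext fun h => ?_)
      calc φ (Z Y) Y' (Smap (f + g)) h
          = φ (Z Y) Y (𝟙 (Z Y)) ((f + g) ≫ h) := hφS (f + g) h
        _ = φ (Z Y) Y (𝟙 (Z Y)) (f ≫ h) + φ (Z Y) Y (𝟙 (Z Y)) (g ≫ h) := by
            rw [Preadditive.add_comp, map_add]
        _ = φ (Z Y) Y' (Smap f) h + φ (Z Y) Y' (Smap g) h := by
            rw [hφS f h, hφS g h]
        _ = φ (Z Y) Y' (Smap f + Smap g) h := by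
            rw [map_add]; rfl
    · intro Y Y' r f
      refine (φ (Z Y) Y').injective (LinearMap.ext fun h => ?_)
      calc φ (Z Y) Y' (Smap (r • f)) h
          = φ (Z Y) Y (𝟙 (Z Y)) ((r • f) ≫ h) := hφS (r • f) h
        _ = r • φ (Z Y) Y (𝟙 (Z Y)) (f ≫ h) := by
            rw [Linear.smul_comp, map_smul]
        _ = r • φ (Z Y) Y' (Smap f) h := by rw [hφS f h]
        _ = φ (Z Y) Y' (r • Smap f) h := by rw [map_smul]; rfl
    · exact hnat
    · intro X Y W y f h
      exact key X Y W y f h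
end

section
/- Trace functionals determine the Serre functor (k-linear case): let S₀ be a map from the objects of C to the objects of C and, for each object X, let τ_X : (X ⟶ S₀ X) →ₗ[k] k be a k-linear functional. Assume that for all objects X, Y the k-linear map (X ⟶ S₀ Y) ⟶ Module.Dual k (Y ⟶ X), f ↦ (g ↦ τ_Y(g ≫ f)), is bijective. Then there exists a unique k-linear functor S : C ⥤ C with S.obj = S₀ such that τ_X(f ≫ S.map g) = τ_Y(g ≫ f) for all objects X, Y and all g : Y ⟶ X, f : X ⟶ S₀ Y; moreover, setting ψ_{X,Y}(f)(g) := τ_Y(g ≫ f), the pair (S,ψ) is a right Serre k-functor on C. -/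
/-!
Nondegeneracy of the trace pairing forces `S g` to be the morphism representing the functional
`h ↦ τ (g ≫ h)`, which exists by surjectivity. Injectivity then makes a morphism into `S₀ Y`
determined by its traces against all `h`, so each functor and linearity law, and uniqueness,
reduces to an identity of traces that follows from associativity and bilinearity.
-/

open CategoryTheory

universe w v u

namespace CategoryTheory

variable {k : Type w} [CommRing k] {C : Type u} [Category.{v} C] [Preadditive C] [Linear k C]
  {S₀ : C → C}

theorem hom_ext_of_trace_comp {τ : ∀ X : C, (X ⟶ S₀ X) →ₗ[k] k} {X Y : C}
    (hinj : Function.Injective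
      (fun f : X ⟶ S₀ Y => ((τ Y).comp (Linear.rightComp k Y f) : Module.Dual k (Y ⟶ X))))
    {a b : X ⟶ S₀ Y} (h : ∀ g : Y ⟶ X, τ Y (g ≫ a) = τ Y (g ≫ b)) : a = b :=
  hinj (LinearMap.ext h)

variable (τ : ∀ X : C, (X ⟶ S₀ X) →ₗ[k] k)
  (hbij : ∀ X Y : C, Function.Bijective
    (fun f : X ⟶ S₀ Y => ((τ Y).comp (Linear.rightComp k Y f) : Module.Dual k (Y ⟶ X))))

noncomputable def traceMap {Y X : C} (g : Y ⟶ X) : S₀ Y ⟶ S₀ X :=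
  Function.surjInv (hbij (S₀ Y) X).2 ((τ Y).comp (Linear.leftComp k (S₀ Y) g))

theorem trace_comp_traceMap {Y X : C} (g : Y ⟶ X) (h : X ⟶ S₀ Y) :
    τ X (h ≫ traceMap τ hbij g) = τ Y (g ≫ h) :=
  LinearMap.congr_fun (Function.surjInv_eq (hbij (S₀ Y) X).2 _) h

theorem eq_traceMap {Y X : C} {g : Y ⟶ X} {s : S₀ Y ⟶ S₀ X}
    (hs : ∀ h : X ⟶ S₀ Y, τ X (h ≫ s) = τ Y (g ≫ h)) : s = traceMap τ hbij g :=
  hom_ext_of_trace_comp (hbij _ _).1 fun h => by rw [hs, trace_comp_traceMap]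

theorem traceMap_id (Y : C) : traceMap τ hbij (𝟙 Y) = 𝟙 (S₀ Y) :=
  (eq_traceMap τ hbij fun h => by simp).symm

theorem traceMap_comp {X Y Z : C} (g : X ⟶ Y) (g' : Y ⟶ Z) :
    traceMap τ hbij (g ≫ g') = traceMap τ hbij g ≫ traceMap τ hbij g' :=
  (eq_traceMap τ hbij fun h => by
    rw [← Category.assoc, trace_comp_traceMap, ← Category.assoc, trace_comp_traceMap,
      Category.assoc]).symm

theorem traceMap_add {Y X : C} (g g' : Y ⟶ X) :
    traceMap τ hbij (g + g') = traceMap τ hbij g + traceMap τ hbij g' :=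
  (eq_traceMap τ hbij fun h => by
    rw [Preadditive.comp_add, map_add, trace_comp_traceMap, trace_comp_traceMap,
      Preadditive.add_comp, map_add]).symm

theorem traceMap_smul {Y X : C} (r : k) (g : Y ⟶ X) :
    traceMap τ hbij (r • g) = r • traceMap τ hbij g :=
  (eq_traceMap τ hbij fun h => by
    rw [Linear.comp_smul, map_smul, trace_comp_traceMap, Linear.smul_comp, map_smul]).symm

end CategoryTheory

/-- Trace functionals determine the Serre functor (k-linear case).  Given an object map `S₀`
and trace functionals `τ X : (X ⟶ S₀ X) →ₗ[k] k` such that the pairings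
`f ↦ (g ↦ τ (g ≫ f))` are bijective, there is a unique way to extend `S₀` to a k-linear
functor `S` satisfying `τ (f ≫ S.map g) = τ (g ≫ f)`; with `ψ X Y f g := τ Y (g ≫ f)` the
pair `(S, ψ)` is a right Serre k-functor (`ψ` is natural in both variables). -/
theorem trace_determines_rightSerre_linear
    (k : Type w) [CommRing k] {C : Type u} [Category.{v} C] [Preadditive C]
    [CategoryTheory.Linear k C]
    (S₀ : C → C) (τ : ∀ X : C, (X ⟶ S₀ X) →ₗ[k] k)
    (hbij : ∀ X Y : C, Function.Bijective
      (fun f : X ⟶ S₀ Y =>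
        ((τ Y).comp (Linear.rightComp k Y f) : Module.Dual k (Y ⟶ X)))) :
    ∃ Smap : ∀ ⦃Y X : C⦄, (Y ⟶ X) → (S₀ Y ⟶ S₀ X),
      ((∀ Y : C, Smap (𝟙 Y) = 𝟙 (S₀ Y)) ∧
        (∀ (X Y Z : C) (g : X ⟶ Y) (h : Y ⟶ Z), Smap (g ≫ h) = Smap g ≫ Smap h) ∧
        (∀ (X Y : C) (g g' : X ⟶ Y), Smap (g + g') = Smap g + Smap g') ∧
        (∀ (X Y : C) (r : k) (g : X ⟶ Y), Smap (r • g) = r • Smap g) ∧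
        (∀ (X Y : C) (g : Y ⟶ X) (f : X ⟶ S₀ Y), τ X (f ≫ Smap g) = τ Y (g ≫ f))) ∧
      (∀ Smap' : ∀ ⦃Y X : C⦄, (Y ⟶ X) → (S₀ Y ⟶ S₀ X),
        ((∀ Y : C, Smap' (𝟙 Y) = 𝟙 (S₀ Y)) ∧
          (∀ (X Y Z : C) (g : X ⟶ Y) (h : Y ⟶ Z), Smap' (g ≫ h) = Smap' g ≫ Smap' h) ∧
          (∀ (X Y : C) (g g' : X ⟶ Y), Smap' (g + g') = Smap' g + Smap' g') ∧
          (∀ (X Y : C) (r : k) (g : X ⟶ Y), Smap' (r • g) = r • Smap' g) ∧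
          (∀ (X Y : C) (g : Y ⟶ X) (f : X ⟶ S₀ Y), τ X (f ≫ Smap' g) = τ Y (g ≫ f))) →
        Smap' = Smap) ∧
      -- with `ψ X Y f g := τ Y (g ≫ f)`, the pair `(S, ψ)` is a right Serre k-functor:
      -- `ψ` is natural in the first variable ...
      ((∀ (X Z Y : C) (x : Z ⟶ X) (f : X ⟶ S₀ Y) (z : Y ⟶ Z),
          τ Y (z ≫ (x ≫ f)) = τ Y ((z ≫ x) ≫ f)) ∧
        -- ... and in the second variable
        (∀ (X Y Z : C) (y : Y ⟶ Z) (f : X ⟶ S₀ Y) (h : Z ⟶ X),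
          τ Z (h ≫ (f ≫ Smap y)) = τ Y ((y ≫ h) ≫ f))) := by
  refine ⟨fun _ _ => traceMap τ hbij, ⟨traceMap_id τ hbij, fun _ _ _ => traceMap_comp τ hbij,
    fun _ _ => traceMap_add τ hbij, fun _ _ => traceMap_smul τ hbij,
    fun _ _ => trace_comp_traceMap τ hbij⟩, ?_, ?_, ?_⟩
  · rintro Smap' ⟨-, -, -, -, htrace⟩
    funext Y X g
    exact eq_traceMap τ hbij (htrace X Y g)
  · intro X Z Y x f z
    rw [Category.assoc]
  · intro X Y Z y f h
    rw [← Category.assoc h f, trace_comp_traceMap, Category.assoc]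
end

section
/- Uniqueness of Serre functors on k-linear categories: if (S,ψ) and (S′,ψ′) are right Serre k-functors on the same k-linear category C, then the functors S and S′ are naturally isomorphic, i.e. there is an isomorphism S ≅ S′ in the functor category C ⥤ C. -/
open CategoryTheory

universe w v u

/-! Composing `ψ` with the inverse of `ψ'` identifies `X ⟶ S.obj Y` with `X ⟶ S'.obj Y`
naturally in `X` and `Y`, i.e. it is an isomorphism `S ⋙ yoneda ≅ S' ⋙ yoneda`; since the
Yoneda embedding is fully faithful, this comes from an isomorphism `S ≅ S'`. -/

namespace CategoryTheory.Functor

variable {D : Type*} [Category* D] {C : Type u} [Category.{v} C] {F G : D ⥤ C}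

def isoOfHomEquiv (e : ∀ X Y, (X ⟶ F.obj Y) ≃ (X ⟶ G.obj Y))
    (comp_left : ∀ {X X' : C} (Y : D) (x : X' ⟶ X) (f : X ⟶ F.obj Y),
      e X' Y (x ≫ f) = x ≫ e X Y f)
    (comp_right : ∀ (X : C) {Y Y' : D} (y : Y ⟶ Y') (f : X ⟶ F.obj Y),
      e X Y' (f ≫ F.map y) = e X Y f ≫ G.map y) :
    F ≅ G :=
  (Yoneda.fullyFaithful.whiskeringRight D).preimageIso <|
    NatIso.ofComponents
      (fun Y => NatIso.ofComponents (fun X => (e X.unop Y).toIso)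
        (fun x => by ext f; exact comp_left Y x.unop f))
      (fun y => by ext X f; exact comp_right X.unop y f)

end CategoryTheory.Functor

section Serre

variable {k : Type w} [CommRing k] {C : Type u} [Category.{v} C] [Preadditive C]
  [Linear k C] {S S' : C ⥤ C}
  (ψ : ∀ X Y : C, (X ⟶ S.obj Y) ≃ₗ[k] Module.Dual k (Y ⟶ X))
  (ψ' : ∀ X Y : C, (X ⟶ S'.obj Y) ≃ₗ[k] Module.Dual k (Y ⟶ X))

def serreHomEquiv (X Y : C) : (X ⟶ S.obj Y) ≃ (X ⟶ S'.obj Y) :=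
  ((ψ X Y).trans (ψ' X Y).symm).toEquiv

theorem apply_serreHomEquiv {X Y : C} (f : X ⟶ S.obj Y) :
    ψ' X Y (serreHomEquiv ψ ψ' X Y f) = ψ X Y f :=
  (ψ' X Y).apply_symm_apply _

theorem serreHomEquiv_comp_left
    (hψ : ∀ (X Z Y : C) (x : Z ⟶ X) (f : X ⟶ S.obj Y) (z : Y ⟶ Z),
      ψ Z Y (x ≫ f) z = ψ X Y f (z ≫ x))
    (hψ' : ∀ (X Z Y : C) (x : Z ⟶ X) (f : X ⟶ S'.obj Y) (z : Y ⟶ Z),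
      ψ' Z Y (x ≫ f) z = ψ' X Y f (z ≫ x))
    {X X' : C} (Y : C) (x : X' ⟶ X) (f : X ⟶ S.obj Y) :
    serreHomEquiv ψ ψ' X' Y (x ≫ f) = x ≫ serreHomEquiv ψ ψ' X Y f := by
  apply (ψ' X' Y).injective
  ext z
  rw [apply_serreHomEquiv, hψ, hψ', apply_serreHomEquiv]

theorem serreHomEquiv_comp_right
    (hψ : ∀ (X Y Z : C) (y : Y ⟶ Z) (f : X ⟶ S.obj Y) (h : Z ⟶ X),
      ψ X Z (f ≫ S.map y) h = ψ X Y f (y ≫ h))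
    (hψ' : ∀ (X Y Z : C) (y : Y ⟶ Z) (f : X ⟶ S'.obj Y) (h : Z ⟶ X),
      ψ' X Z (f ≫ S'.map y) h = ψ' X Y f (y ≫ h))
    (X : C) {Y Y' : C} (y : Y ⟶ Y') (f : X ⟶ S.obj Y) :
    serreHomEquiv ψ ψ' X Y' (f ≫ S.map y) = serreHomEquiv ψ ψ' X Y f ≫ S'.map y := by
  apply (ψ' X Y').injective
  ext h
  rw [apply_serreHomEquiv, hψ, hψ', apply_serreHomEquiv]

end Serre

theorem rightSerre_linear_unique_up_to_iso_general
    (k : Type w) [CommRing k] {C : Type u} [Category.{v} C] [Preadditive C]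
    [CategoryTheory.Linear k C]
    (S : C ⥤ C) (S' : C ⥤ C)
    (ψ : ∀ X Y : C, (X ⟶ S.obj Y) ≃ₗ[k] Module.Dual k (Y ⟶ X))
    (ψ' : ∀ X Y : C, (X ⟶ S'.obj Y) ≃ₗ[k] Module.Dual k (Y ⟶ X))
    (hnat₁ : ∀ (X Z Y : C) (x : Z ⟶ X) (f : X ⟶ S.obj Y) (z : Y ⟶ Z),
        ψ Z Y (x ≫ f) z = ψ X Y f (z ≫ x))
    (hnat₂ : ∀ (X Y Z : C) (y : Y ⟶ Z) (f : X ⟶ S.obj Y) (h : Z ⟶ X),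
        ψ X Z (f ≫ S.map y) h = ψ X Y f (y ≫ h))
    (hnat₁' : ∀ (X Z Y : C) (x : Z ⟶ X) (f : X ⟶ S'.obj Y) (z : Y ⟶ Z),
        ψ' Z Y (x ≫ f) z = ψ' X Y f (z ≫ x))
    (hnat₂' : ∀ (X Y Z : C) (y : Y ⟶ Z) (f : X ⟶ S'.obj Y) (h : Z ⟶ X),
        ψ' X Z (f ≫ S'.map y) h = ψ' X Y f (y ≫ h)) :
    Nonempty (S ≅ S') :=
  ⟨Functor.isoOfHomEquiv (serreHomEquiv ψ ψ')
    (serreHomEquiv_comp_left ψ ψ' hnat₁ hnat₁')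
    (serreHomEquiv_comp_right ψ ψ' hnat₂ hnat₂')⟩

/-- Uniqueness of Serre functors on k-linear categories: two right Serre k-functors on the
same k-linear category are naturally isomorphic. -/
theorem rightSerre_linear_unique_up_to_iso
    (k : Type w) [CommRing k] {C : Type u} [Category.{v} C] [Preadditive C]
    [CategoryTheory.Linear k C]
    (S : C ⥤ C) [S.Additive] [S.Linear k] (S' : C ⥤ C) [S'.Additive] [S'.Linear k]
    (ψ : ∀ X Y : C, (X ⟶ S.obj Y) ≃ₗ[k] Module.Dual k (Y ⟶ X))
    (ψ' : ∀ X Y : C, (X ⟶ S'.obj Y) ≃ₗ[k] Module.Dual k (Y ⟶ X))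
    (hnat₁ : ∀ (X Z Y : C) (x : Z ⟶ X) (f : X ⟶ S.obj Y) (z : Y ⟶ Z),
        ψ Z Y (x ≫ f) z = ψ X Y f (z ≫ x))
    (hnat₂ : ∀ (X Y Z : C) (y : Y ⟶ Z) (f : X ⟶ S.obj Y) (h : Z ⟶ X),
        ψ X Z (f ≫ S.map y) h = ψ X Y f (y ≫ h))
    (hnat₁' : ∀ (X Z Y : C) (x : Z ⟶ X) (f : X ⟶ S'.obj Y) (z : Y ⟶ Z),
        ψ' Z Y (x ≫ f) z = ψ' X Y f (z ≫ x))
    (hnat₂' : ∀ (X Y Z : C) (y : Y ⟶ Z) (f : X ⟶ S'.obj Y) (h : Z ⟶ X),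
        ψ' X Z (f ≫ S'.map y) h = ψ' X Y f (y ≫ h)) :
    Nonempty (S ≅ S') :=
  rightSerre_linear_unique_up_to_iso_general k S S' ψ ψ' hnat₁ hnat₂ hnat₁' hnat₂'
end

section
/- Let C and C′ be k-linear categories with right Serre k-functors (S,ψ) and (S′,ψ′) respectively, and let T : C ⥤ C′ be a k-linear fully faithful functor. Then there exists a unique family of morphisms κ_Y : T.obj (S.obj Y) ⟶ S′.obj (T.obj Y) (Y an object of C) such that ψ′_{T.obj Y, T.obj Y}(T.map f ≫ κ_Y)(𝟙_{T.obj Y}) = ψ_{Y,Y}(f)(𝟙_Y) for all f : Y ⟶ S.obj Y. Moreover this family is a natural transformation κ : S ⋙ T ⟶ T ⋙ S′, and it satisfies ψ′_{T.obj X, T.obj Y}(T.map f ≫ κ_Y)(T.map g) = ψ_{X,Y}(f)(g) for all objects X, Y and all f : X ⟶ S.obj Y, g : Y ⟶ X. -/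
/-!
Since `ψ'` is an isomorphism, a morphism `T (S Y) ⟶ S' (T Y)` is the same thing as a functional
on `T Y ⟶ T (S Y)`, and full faithfulness identifies this hom-module with `Y ⟶ S Y`. We let
`κ Y` be the morphism corresponding to the trace functional `ψ (𝟙 (S Y))`. Naturality of `ψ` in
the first variable says that every value `ψ f g` is a value `ψ (𝟙) (g ≫ f)` of the trace, which
gives the compatibility of `κ` with `ψ` and `ψ'`; uniqueness and naturality of `κ` then follow by
testing against `ψ'`, where only arguments of the form `T.map g` need to be checked since `T` is full.
-/

open CategoryTheory

universe w v u v' u'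

namespace CategoryTheory

variable {k : Type w} [CommRing k]

section Linear

variable {C : Type u} [Category.{v} C] [Preadditive C] [CategoryTheory.Linear k C]
  {C' : Type u'} [Category.{v'} C'] [Preadditive C'] [CategoryTheory.Linear k C']
  (T : C ⥤ C') [T.Additive] [T.Linear k] [T.Full] [T.Faithful]

variable (k) in
noncomputable def Functor.mapLinearEquiv (X Y : C) : (X ⟶ Y) ≃ₗ[k] (T.obj X ⟶ T.obj Y) :=
  { T.mapLinearMap k, (Functor.FullyFaithful.ofFullyFaithful T).homEquiv with }

@[simp]
theorem Functor.mapLinearEquiv_apply {X Y : C} (f : X ⟶ Y) : T.mapLinearEquiv k X Y f = T.map f :=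
  rfl

end Linear

section Naturality

variable {C : Type u} [Category.{v} C] [Preadditive C] [CategoryTheory.Linear k C] {S : C ⥤ C}

def SerreDuality.NaturalLeft (ψ : ∀ X Y : C, (X ⟶ S.obj Y) ≃ₗ[k] Module.Dual k (Y ⟶ X)) : Prop :=
  ∀ (X Z Y : C) (x : Z ⟶ X) (f : X ⟶ S.obj Y) (z : Y ⟶ Z), ψ Z Y (x ≫ f) z = ψ X Y f (z ≫ x)

def SerreDuality.NaturalRight (ψ : ∀ X Y : C, (X ⟶ S.obj Y) ≃ₗ[k] Module.Dual k (Y ⟶ X)) : Prop :=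
  ∀ (X Y Z : C) (y : Y ⟶ Z) (f : X ⟶ S.obj Y) (h : Z ⟶ X),
    ψ X Z (f ≫ S.map y) h = ψ X Y f (y ≫ h)

theorem SerreDuality.NaturalLeft.apply_eq_apply_id
    {ψ : ∀ X Y : C, (X ⟶ S.obj Y) ≃ₗ[k] Module.Dual k (Y ⟶ X)} (hψ : SerreDuality.NaturalLeft ψ)
    {X Y : C} (f : X ⟶ S.obj Y) (g : Y ⟶ X) :
    ψ X Y f g = ψ (S.obj Y) Y (𝟙 _) (g ≫ f) := by
  simpa using hψ (S.obj Y) X Y f (𝟙 _) g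

end Naturality

theorem eq_of_serre_apply_map_eq {C : Type u} [Category.{v} C]
    {C' : Type u'} [Category.{v'} C'] [Preadditive C'] [CategoryTheory.Linear k C'] {S' : C' ⥤ C'}
    (ψ' : ∀ X Y : C', (X ⟶ S'.obj Y) ≃ₗ[k] Module.Dual k (Y ⟶ X)) (T : C ⥤ C') [T.Full]
    {X Y : C} {a b : T.obj X ⟶ S'.obj (T.obj Y)}
    (h : ∀ g : Y ⟶ X, ψ' _ _ a (T.map g) = ψ' _ _ b (T.map g)) : a = b := by
  refine (ψ' _ _).injective (LinearMap.ext fun g => ?_)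
  simpa using h (T.preimage g)

section Comparison

variable {C : Type u} [Category.{v} C] [Preadditive C] [CategoryTheory.Linear k C]
  {C' : Type u'} [Category.{v'} C'] [Preadditive C'] [CategoryTheory.Linear k C']
  {S : C ⥤ C} (ψ : ∀ X Y : C, (X ⟶ S.obj Y) ≃ₗ[k] Module.Dual k (Y ⟶ X))
  {S' : C' ⥤ C'} (ψ' : ∀ X Y : C', (X ⟶ S'.obj Y) ≃ₗ[k] Module.Dual k (Y ⟶ X))
  (T : C ⥤ C') [T.Additive] [T.Linear k] [T.Full] [T.Faithful]

noncomputable def serreComparison (Y : C) : T.obj (S.obj Y) ⟶ S'.obj (T.obj Y) :=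
  (ψ' _ _).symm ((T.mapLinearEquiv k Y (S.obj Y)).symm.dualMap (ψ (S.obj Y) Y (𝟙 _)))

theorem serreComparison_apply_map {Y : C} (g : Y ⟶ S.obj Y) :
    ψ' _ _ (serreComparison ψ ψ' T Y) (T.map g) = ψ (S.obj Y) Y (𝟙 _) g := by
  rw [serreComparison, LinearEquiv.apply_symm_apply, LinearEquiv.dualMap_apply,
    ← Functor.mapLinearEquiv_apply (k := k) T g, LinearEquiv.symm_apply_apply]

theorem serre_apply_map_comp_serreComparison
    (hnat₁ : SerreDuality.NaturalLeft ψ) (hnat₁' : SerreDuality.NaturalLeft ψ')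
    {X Y : C} (f : X ⟶ S.obj Y) (g : Y ⟶ X) :
    ψ' _ _ (T.map f ≫ serreComparison ψ ψ' T Y) (T.map g) = ψ X Y f g := by
  rw [hnat₁', ← T.map_comp, serreComparison_apply_map, hnat₁.apply_eq_apply_id f g]

theorem serreComparison_unique
    (hnat₁ : SerreDuality.NaturalLeft ψ) (hnat₁' : SerreDuality.NaturalLeft ψ')
    (κ : ∀ Y : C, T.obj (S.obj Y) ⟶ S'.obj (T.obj Y))
    (hκ : ∀ (Y : C) (f : Y ⟶ S.obj Y),
      ψ' (T.obj Y) (T.obj Y) (T.map f ≫ κ Y) (𝟙 (T.obj Y)) = ψ Y Y f (𝟙 Y)) :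
    κ = serreComparison ψ ψ' T := by
  funext Y
  refine eq_of_serre_apply_map_eq ψ' T fun g => ?_
  rw [serreComparison_apply_map, ← Category.id_comp (T.map g), ← hnat₁', hκ,
    hnat₁.apply_eq_apply_id g (𝟙 Y), Category.id_comp]

theorem serreComparison_naturality
    (hnat₁ : SerreDuality.NaturalLeft ψ) (hnat₂ : SerreDuality.NaturalRight ψ)
    (hnat₁' : SerreDuality.NaturalLeft ψ') (hnat₂' : SerreDuality.NaturalRight ψ')
    {X Y : C} (u : X ⟶ Y) :
    T.map (S.map u) ≫ serreComparison ψ ψ' T Y =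
      serreComparison ψ ψ' T X ≫ S'.map (T.map u) := by
  refine eq_of_serre_apply_map_eq ψ' T fun w => ?_
  rw [serre_apply_map_comp_serreComparison ψ ψ' T hnat₁ hnat₁', hnat₂', ← T.map_comp,
    serreComparison_apply_map, ← hnat₂, Category.id_comp]

end Comparison

end CategoryTheory

theorem rightSerre_linear_fully_faithful_comparison_general
    (k : Type w) [CommRing k]
    {C : Type u} [Category.{v} C] [Preadditive C] [CategoryTheory.Linear k C]
    {C' : Type u'} [Category.{v'} C'] [Preadditive C'] [CategoryTheory.Linear k C']
    (S : C ⥤ C) (S' : C' ⥤ C')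
    (ψ : ∀ X Y : C, (X ⟶ S.obj Y) ≃ₗ[k] Module.Dual k (Y ⟶ X))
    (ψ' : ∀ X Y : C', (X ⟶ S'.obj Y) ≃ₗ[k] Module.Dual k (Y ⟶ X))
    (hnat₁ : ∀ (X Z Y : C) (x : Z ⟶ X) (f : X ⟶ S.obj Y) (z : Y ⟶ Z),
        ψ Z Y (x ≫ f) z = ψ X Y f (z ≫ x))
    (hnat₂ : ∀ (X Y Z : C) (y : Y ⟶ Z) (f : X ⟶ S.obj Y) (h : Z ⟶ X),
        ψ X Z (f ≫ S.map y) h = ψ X Y f (y ≫ h))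
    (hnat₁' : ∀ (X Z Y : C') (x : Z ⟶ X) (f : X ⟶ S'.obj Y) (z : Y ⟶ Z),
        ψ' Z Y (x ≫ f) z = ψ' X Y f (z ≫ x))
    (hnat₂' : ∀ (X Y Z : C') (y : Y ⟶ Z) (f : X ⟶ S'.obj Y) (h : Z ⟶ X),
        ψ' X Z (f ≫ S'.map y) h = ψ' X Y f (y ≫ h))
    (T : C ⥤ C') [T.Additive] [T.Linear k] [T.Full] [T.Faithful] :
    ∃ κ : ∀ Y : C, T.obj (S.obj Y) ⟶ S'.obj (T.obj Y),
      (∀ (Y : C) (f : Y ⟶ S.obj Y),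
          ψ' (T.obj Y) (T.obj Y) (T.map f ≫ κ Y) (𝟙 (T.obj Y)) = ψ Y Y f (𝟙 Y)) ∧
      (∀ κ' : ∀ Y : C, T.obj (S.obj Y) ⟶ S'.obj (T.obj Y),
          (∀ (Y : C) (f : Y ⟶ S.obj Y),
            ψ' (T.obj Y) (T.obj Y) (T.map f ≫ κ' Y) (𝟙 (T.obj Y)) = ψ Y Y f (𝟙 Y)) →
          κ' = κ) ∧
      (∀ (X Y : C) (u : X ⟶ Y),
          T.map (S.map u) ≫ κ Y = κ X ≫ S'.map (T.map u)) ∧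
      (∀ (X Y : C) (f : X ⟶ S.obj Y) (g : Y ⟶ X),
          ψ' (T.obj X) (T.obj Y) (T.map f ≫ κ Y) (T.map g) = ψ X Y f g) := by
  refine ⟨serreComparison ψ ψ' T, fun Y f => ?_,
    serreComparison_unique ψ ψ' T hnat₁ hnat₁',
    fun _ _ u => serreComparison_naturality ψ ψ' T hnat₁ hnat₂ hnat₁' hnat₂' u,
    fun _ _ => serre_apply_map_comp_serreComparison ψ ψ' T hnat₁ hnat₁'⟩
  simpa using serre_apply_map_comp_serreComparison ψ ψ' T hnat₁ hnat₁' f (𝟙 Y)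

/-- Serre functors and fully faithful k-linear functors: given right Serre k-functors
`(S, ψ)` on `C` and `(S', ψ')` on `C'` and a fully faithful k-linear functor `T : C ⥤ C'`,
there is a unique family `κ Y : T (S Y) ⟶ S' (T Y)` with
`ψ' (T.map f ≫ κ Y) (𝟙) = ψ f (𝟙)`; it is a natural transformation `S ⋙ T ⟶ T ⋙ S'`
and satisfies `ψ' (T.map f ≫ κ Y) (T.map g) = ψ f g`. -/
theorem rightSerre_linear_fully_faithful_comparison
    (k : Type w) [CommRing k]
    {C : Type u} [Category.{v} C] [Preadditive C] [CategoryTheory.Linear k C]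
    {C' : Type u'} [Category.{v'} C'] [Preadditive C'] [CategoryTheory.Linear k C']
    (S : C ⥤ C) [S.Additive] [S.Linear k] (S' : C' ⥤ C') [S'.Additive] [S'.Linear k]
    (ψ : ∀ X Y : C, (X ⟶ S.obj Y) ≃ₗ[k] Module.Dual k (Y ⟶ X))
    (ψ' : ∀ X Y : C', (X ⟶ S'.obj Y) ≃ₗ[k] Module.Dual k (Y ⟶ X))
    (hnat₁ : ∀ (X Z Y : C) (x : Z ⟶ X) (f : X ⟶ S.obj Y) (z : Y ⟶ Z),
        ψ Z Y (x ≫ f) z = ψ X Y f (z ≫ x))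
    (hnat₂ : ∀ (X Y Z : C) (y : Y ⟶ Z) (f : X ⟶ S.obj Y) (h : Z ⟶ X),
        ψ X Z (f ≫ S.map y) h = ψ X Y f (y ≫ h))
    (hnat₁' : ∀ (X Z Y : C') (x : Z ⟶ X) (f : X ⟶ S'.obj Y) (z : Y ⟶ Z),
        ψ' Z Y (x ≫ f) z = ψ' X Y f (z ≫ x))
    (hnat₂' : ∀ (X Y Z : C') (y : Y ⟶ Z) (f : X ⟶ S'.obj Y) (h : Z ⟶ X),
        ψ' X Z (f ≫ S'.map y) h = ψ' X Y f (y ≫ h))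
    (T : C ⥤ C') [T.Additive] [T.Linear k] [T.Full] [T.Faithful] :
    ∃ κ : ∀ Y : C, T.obj (S.obj Y) ⟶ S'.obj (T.obj Y),
      (∀ (Y : C) (f : Y ⟶ S.obj Y),
          ψ' (T.obj Y) (T.obj Y) (T.map f ≫ κ Y) (𝟙 (T.obj Y)) = ψ Y Y f (𝟙 Y)) ∧
      (∀ κ' : ∀ Y : C, T.obj (S.obj Y) ⟶ S'.obj (T.obj Y),
          (∀ (Y : C) (f : Y ⟶ S.obj Y),
            ψ' (T.obj Y) (T.obj Y) (T.map f ≫ κ' Y) (𝟙 (T.obj Y)) = ψ Y Y f (𝟙 Y)) →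
          κ' = κ) ∧
      (∀ (X Y : C) (u : X ⟶ Y),
          T.map (S.map u) ≫ κ Y = κ X ≫ S'.map (T.map u)) ∧
      (∀ (X Y : C) (f : X ⟶ S.obj Y) (g : Y ⟶ X),
          ψ' (T.obj X) (T.obj Y) (T.map f ≫ κ Y) (T.map g) = ψ X Y f g) :=
  rightSerre_linear_fully_faithful_comparison_general k S S' ψ ψ' hnat₁ hnat₂ hnat₁' hnat₂' T
end

section
/- Serre functors commute with equivalences (k-linear case): let C and C′ be k-linear categories with right Serre k-functors (S,ψ) and (S′,ψ′) respectively, and let T : C ⥤ C′ be a k-linear functor which is an equivalence of categories. Then the unique natural transformation κ : S ⋙ T ⟶ T ⋙ S′ characterized by ψ′_{T.obj Y, T.obj Y}(T.map f ≫ κ.app Y)(𝟙_{T.obj Y}) = ψ_{Y,Y}(f)(𝟙_Y) for all f : Y ⟶ S.obj Y is an isomorphism of functors; in particular S ⋙ T ≅ T ⋙ S′. -/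
/-!
Because `T` is fully faithful, the Serre dualities `ψ` and `ψ'` combine into linear
equivalences `(W ⟶ S Y) ≃ (T W ⟶ S' (T Y))`, obtained by transporting functionals along
`T.map : (Y ⟶ W) ≃ (T Y ⟶ T W)`. The image of `𝟙 (S Y)` is the component `κ_Y`, and by the
naturality of `ψ, ψ'` the equivalence is `x ↦ T.map x ≫ κ_Y`. So composition with `κ_Y` is
bijective on morphisms out of every `T W`, and since `T` is essentially surjective, `κ_Y` is an
isomorphism by Yoneda. Uniqueness holds because a morphism `a` into `S' Y'` is determined by
its "traces" `ψ' (g ≫ a) 𝟙 = ψ' a g`.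
-/

open CategoryTheory

universe w v u v' u'

lemma isIso_of_yoneda_map_bijective_of_essSurj {C D : Type*} [Category C] [Category D]
    (F : C ⥤ D) [F.EssSurj] {A B : D} (f : A ⟶ B)
    (hf : ∀ X : C, Function.Bijective fun x : F.obj X ⟶ A => x ≫ f) : IsIso f := by
  refine isIso_of_yoneda_map_bijective f fun W => ?_
  let e := F.objObjPreimageIso W
  have hconj : (fun x : W ⟶ A => x ≫ f) =
      e.homCongr (Iso.refl B) ∘ (fun x => x ≫ f) ∘ (e.homCongr (Iso.refl A)).symm := by
    ext x
    simp
  rw [hconj]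
  exact (Equiv.bijective _).comp ((hf _).comp (Equiv.bijective _))

lemma serre_hom_ext {k : Type w} [CommRing k]
    {C : Type u} [Category.{v} C] [Preadditive C] [CategoryTheory.Linear k C] {S : C ⥤ C}
    (ψ : ∀ X Y : C, (X ⟶ S.obj Y) ≃ₗ[k] Module.Dual k (Y ⟶ X))
    (hnat₁ : ∀ (X Z Y : C) (x : Z ⟶ X) (f : X ⟶ S.obj Y) (z : Y ⟶ Z),
        ψ Z Y (x ≫ f) z = ψ X Y f (z ≫ x))
    {X Y : C} {a b : X ⟶ S.obj Y}
    (h : ∀ g : Y ⟶ X, ψ Y Y (g ≫ a) (𝟙 Y) = ψ Y Y (g ≫ b) (𝟙 Y)) : a = b :=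
  (ψ X Y).injective <| LinearMap.ext fun g => by
    simpa only [hnat₁, Category.id_comp] using h g

lemma serre_natTrans_ext {k : Type w} [CommRing k] {C : Type u} [Category.{v} C]
    {C' : Type u'} [Category.{v'} C'] [Preadditive C'] [CategoryTheory.Linear k C']
    {S : C ⥤ C} {S' : C' ⥤ C'}
    (ψ' : ∀ X Y : C', (X ⟶ S'.obj Y) ≃ₗ[k] Module.Dual k (Y ⟶ X))
    (hnat₁' : ∀ (X Z Y : C') (x : Z ⟶ X) (f : X ⟶ S'.obj Y) (z : Y ⟶ Z),
        ψ' Z Y (x ≫ f) z = ψ' X Y f (z ≫ x))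
    {T : C ⥤ C'} [T.Full] {κ₁ κ₂ : S ⋙ T ⟶ T ⋙ S'}
    (h : ∀ (Y : C) (f : Y ⟶ S.obj Y),
      ψ' (T.obj Y) (T.obj Y) (T.map f ≫ κ₁.app Y) (𝟙 (T.obj Y)) =
        ψ' (T.obj Y) (T.obj Y) (T.map f ≫ κ₂.app Y) (𝟙 (T.obj Y))) :
    κ₁ = κ₂ := by
  ext Y
  refine serre_hom_ext ψ' hnat₁' fun g => ?_
  obtain ⟨f, rfl⟩ := T.map_surjective g
  exact h Y f

variable {k : Type w} [CommRing k]
  {C : Type u} [Category.{v} C] [Preadditive C] [CategoryTheory.Linear k C]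
  {C' : Type u'} [Category.{v'} C'] [Preadditive C'] [CategoryTheory.Linear k C']

namespace CategoryTheory.Functor

variable (k) (T : C ⥤ C') [T.Additive] [T.Linear k] [T.Full] [T.Faithful]

noncomputable def mapLinearEquiv_s12 (X Y : C) : (X ⟶ Y) ≃ₗ[k] (T.obj X ⟶ T.obj Y) :=
  { T.mapLinearMap k, (FullyFaithful.ofFullyFaithful T).homEquiv with }

@[simp]
lemma mapLinearEquiv_apply_s12 {X Y : C} (f : X ⟶ Y) : T.mapLinearEquiv_s12 k X Y f = T.map f := rfl

@[simp]
lemma mapLinearEquiv_symm_apply {X Y : C} (g : T.obj X ⟶ T.obj Y) :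
    (T.mapLinearEquiv_s12 k X Y).symm g = T.preimage g := rfl

end CategoryTheory.Functor

section SerreComparison

variable {S : C ⥤ C} {S' : C' ⥤ C'}
  (ψ : ∀ X Y : C, (X ⟶ S.obj Y) ≃ₗ[k] Module.Dual k (Y ⟶ X))
  (ψ' : ∀ X Y : C', (X ⟶ S'.obj Y) ≃ₗ[k] Module.Dual k (Y ⟶ X))
  (T : C ⥤ C') [T.Additive] [T.Linear k] [T.Full] [T.Faithful]

noncomputable def serreComparisonHomEquiv (W Y : C) :
    (W ⟶ S.obj Y) ≃ₗ[k] (T.obj W ⟶ S'.obj (T.obj Y)) :=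
  (ψ W Y).trans ((T.mapLinearEquiv_s12 k Y W).symm.dualMap.trans (ψ' _ _).symm)

lemma apply_serreComparisonHomEquiv {W Y : C} (x : W ⟶ S.obj Y) (g : T.obj Y ⟶ T.obj W) :
    ψ' _ _ (serreComparisonHomEquiv ψ ψ' T W Y x) g = ψ W Y x (T.preimage g) := by
  simp [serreComparisonHomEquiv]

noncomputable def serreComparisonApp (Y : C) : T.obj (S.obj Y) ⟶ S'.obj (T.obj Y) :=
  serreComparisonHomEquiv ψ ψ' T (S.obj Y) Y (𝟙 _)

lemma map_comp_serreComparisonApp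
    (hnat₁ : ∀ (X Z Y : C) (x : Z ⟶ X) (f : X ⟶ S.obj Y) (z : Y ⟶ Z),
        ψ Z Y (x ≫ f) z = ψ X Y f (z ≫ x))
    (hnat₁' : ∀ (X Z Y : C') (x : Z ⟶ X) (f : X ⟶ S'.obj Y) (z : Y ⟶ Z),
        ψ' Z Y (x ≫ f) z = ψ' X Y f (z ≫ x))
    {W Y : C} (x : W ⟶ S.obj Y) :
    T.map x ≫ serreComparisonApp ψ ψ' T Y = serreComparisonHomEquiv ψ ψ' T W Y x := by
  refine (ψ' _ _).injective (LinearMap.ext fun g => ?_)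
  rw [hnat₁', serreComparisonApp, apply_serreComparisonHomEquiv, apply_serreComparisonHomEquiv,
    T.preimage_comp, T.preimage_map, ← hnat₁, Category.comp_id]

lemma serreComparisonApp_naturality
    (hnat₁ : ∀ (X Z Y : C) (x : Z ⟶ X) (f : X ⟶ S.obj Y) (z : Y ⟶ Z),
        ψ Z Y (x ≫ f) z = ψ X Y f (z ≫ x))
    (hnat₂ : ∀ (X Y Z : C) (y : Y ⟶ Z) (f : X ⟶ S.obj Y) (h : Z ⟶ X),
        ψ X Z (f ≫ S.map y) h = ψ X Y f (y ≫ h))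
    (hnat₁' : ∀ (X Z Y : C') (x : Z ⟶ X) (f : X ⟶ S'.obj Y) (z : Y ⟶ Z),
        ψ' Z Y (x ≫ f) z = ψ' X Y f (z ≫ x))
    (hnat₂' : ∀ (X Y Z : C') (y : Y ⟶ Z) (f : X ⟶ S'.obj Y) (h : Z ⟶ X),
        ψ' X Z (f ≫ S'.map y) h = ψ' X Y f (y ≫ h))
    {Y Z : C} (w : Y ⟶ Z) :
    T.map (S.map w) ≫ serreComparisonApp ψ ψ' T Z =
      serreComparisonApp ψ ψ' T Y ≫ S'.map (T.map w) := by
  refine (ψ' _ _).injective (LinearMap.ext fun h => ?_)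
  rw [map_comp_serreComparisonApp ψ ψ' T hnat₁ hnat₁', hnat₂', serreComparisonApp,
    apply_serreComparisonHomEquiv, apply_serreComparisonHomEquiv, T.preimage_comp, T.preimage_map,
    ← hnat₂, Category.id_comp]

noncomputable def serreComparison
    (hnat₁ : ∀ (X Z Y : C) (x : Z ⟶ X) (f : X ⟶ S.obj Y) (z : Y ⟶ Z),
        ψ Z Y (x ≫ f) z = ψ X Y f (z ≫ x))
    (hnat₂ : ∀ (X Y Z : C) (y : Y ⟶ Z) (f : X ⟶ S.obj Y) (h : Z ⟶ X),
        ψ X Z (f ≫ S.map y) h = ψ X Y f (y ≫ h))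
    (hnat₁' : ∀ (X Z Y : C') (x : Z ⟶ X) (f : X ⟶ S'.obj Y) (z : Y ⟶ Z),
        ψ' Z Y (x ≫ f) z = ψ' X Y f (z ≫ x))
    (hnat₂' : ∀ (X Y Z : C') (y : Y ⟶ Z) (f : X ⟶ S'.obj Y) (h : Z ⟶ X),
        ψ' X Z (f ≫ S'.map y) h = ψ' X Y f (y ≫ h)) :
    S ⋙ T ⟶ T ⋙ S' where
  app := serreComparisonApp ψ ψ' T
  naturality _ _ w := serreComparisonApp_naturality ψ ψ' T hnat₁ hnat₂ hnat₁' hnat₂' w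

lemma serreComparisonApp_trace
    (hnat₁ : ∀ (X Z Y : C) (x : Z ⟶ X) (f : X ⟶ S.obj Y) (z : Y ⟶ Z),
        ψ Z Y (x ≫ f) z = ψ X Y f (z ≫ x))
    (hnat₁' : ∀ (X Z Y : C') (x : Z ⟶ X) (f : X ⟶ S'.obj Y) (z : Y ⟶ Z),
        ψ' Z Y (x ≫ f) z = ψ' X Y f (z ≫ x))
    (Y : C) (f : Y ⟶ S.obj Y) :
    ψ' (T.obj Y) (T.obj Y) (T.map f ≫ serreComparisonApp ψ ψ' T Y) (𝟙 (T.obj Y)) =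
      ψ Y Y f (𝟙 Y) := by
  rw [map_comp_serreComparisonApp ψ ψ' T hnat₁ hnat₁', apply_serreComparisonHomEquiv,
    T.preimage_id]

lemma isIso_serreComparisonApp [T.EssSurj]
    (hnat₁ : ∀ (X Z Y : C) (x : Z ⟶ X) (f : X ⟶ S.obj Y) (z : Y ⟶ Z),
        ψ Z Y (x ≫ f) z = ψ X Y f (z ≫ x))
    (hnat₁' : ∀ (X Z Y : C') (x : Z ⟶ X) (f : X ⟶ S'.obj Y) (z : Y ⟶ Z),
        ψ' Z Y (x ≫ f) z = ψ' X Y f (z ≫ x))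
    (Y : C) : IsIso (serreComparisonApp ψ ψ' T Y) := by
  refine isIso_of_yoneda_map_bijective_of_essSurj T _ fun W => ?_
  have hcomp : (fun x => x ≫ serreComparisonApp ψ ψ' T Y) =
      (T.mapLinearEquiv_s12 k W (S.obj Y)).symm.trans (serreComparisonHomEquiv ψ ψ' T W Y) := by
    ext x
    simp [← map_comp_serreComparisonApp ψ ψ' T hnat₁ hnat₁']
  rw [hcomp]
  exact LinearEquiv.bijective _

end SerreComparison

theorem rightSerre_linear_commutes_with_equivalence_general
    (k : Type w) [CommRing k]
    {C : Type u} [Category.{v} C] [Preadditive C] [CategoryTheory.Linear k C]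
    {C' : Type u'} [Category.{v'} C'] [Preadditive C'] [CategoryTheory.Linear k C']
    (S : C ⥤ C) (S' : C' ⥤ C')
    (ψ : ∀ X Y : C, (X ⟶ S.obj Y) ≃ₗ[k] Module.Dual k (Y ⟶ X))
    (ψ' : ∀ X Y : C', (X ⟶ S'.obj Y) ≃ₗ[k] Module.Dual k (Y ⟶ X))
    (hnat₁ : ∀ (X Z Y : C) (x : Z ⟶ X) (f : X ⟶ S.obj Y) (z : Y ⟶ Z),
        ψ Z Y (x ≫ f) z = ψ X Y f (z ≫ x))
    (hnat₂ : ∀ (X Y Z : C) (y : Y ⟶ Z) (f : X ⟶ S.obj Y) (h : Z ⟶ X),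
        ψ X Z (f ≫ S.map y) h = ψ X Y f (y ≫ h))
    (hnat₁' : ∀ (X Z Y : C') (x : Z ⟶ X) (f : X ⟶ S'.obj Y) (z : Y ⟶ Z),
        ψ' Z Y (x ≫ f) z = ψ' X Y f (z ≫ x))
    (hnat₂' : ∀ (X Y Z : C') (y : Y ⟶ Z) (f : X ⟶ S'.obj Y) (h : Z ⟶ X),
        ψ' X Z (f ≫ S'.map y) h = ψ' X Y f (y ≫ h))
    (T : C ⥤ C') [T.Additive] [T.Linear k] [T.IsEquivalence] :
    ∃ κ : S ⋙ T ⟶ T ⋙ S',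
      (∀ (Y : C) (f : Y ⟶ S.obj Y),
          ψ' (T.obj Y) (T.obj Y) (T.map f ≫ κ.app Y) (𝟙 (T.obj Y)) = ψ Y Y f (𝟙 Y)) ∧
      (∀ κ' : S ⋙ T ⟶ T ⋙ S',
          (∀ (Y : C) (f : Y ⟶ S.obj Y),
            ψ' (T.obj Y) (T.obj Y) (T.map f ≫ κ'.app Y) (𝟙 (T.obj Y)) = ψ Y Y f (𝟙 Y)) →
          κ' = κ) ∧
      IsIso κ := by
  let κ := serreComparison ψ ψ' T hnat₁ hnat₂ hnat₁' hnat₂'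
  have htrace := serreComparisonApp_trace ψ ψ' T hnat₁ hnat₁'
  have : ∀ Y, IsIso (κ.app Y) := isIso_serreComparisonApp ψ ψ' T hnat₁ hnat₁'
  exact ⟨κ, htrace, fun κ' hκ' => serre_natTrans_ext ψ' hnat₁' fun Y f =>
    (hκ' Y f).trans (htrace Y f).symm, NatIso.isIso_of_isIso_app κ⟩

/-- Serre functors commute with equivalences (k-linear case): for right Serre k-functors
`(S, ψ)` on `C` and `(S', ψ')` on `C'` and a k-linear equivalence `T : C ⥤ C'`, the unique
natural transformation `κ : S ⋙ T ⟶ T ⋙ S'` characterized by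
`ψ' (T.map f ≫ κ.app Y) (𝟙) = ψ f (𝟙)` is an isomorphism of functors. -/
theorem rightSerre_linear_commutes_with_equivalence
    (k : Type w) [CommRing k]
    {C : Type u} [Category.{v} C] [Preadditive C] [CategoryTheory.Linear k C]
    {C' : Type u'} [Category.{v'} C'] [Preadditive C'] [CategoryTheory.Linear k C']
    (S : C ⥤ C) [S.Additive] [S.Linear k] (S' : C' ⥤ C') [S'.Additive] [S'.Linear k]
    (ψ : ∀ X Y : C, (X ⟶ S.obj Y) ≃ₗ[k] Module.Dual k (Y ⟶ X))
    (ψ' : ∀ X Y : C', (X ⟶ S'.obj Y) ≃ₗ[k] Module.Dual k (Y ⟶ X))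
    (hnat₁ : ∀ (X Z Y : C) (x : Z ⟶ X) (f : X ⟶ S.obj Y) (z : Y ⟶ Z),
        ψ Z Y (x ≫ f) z = ψ X Y f (z ≫ x))
    (hnat₂ : ∀ (X Y Z : C) (y : Y ⟶ Z) (f : X ⟶ S.obj Y) (h : Z ⟶ X),
        ψ X Z (f ≫ S.map y) h = ψ X Y f (y ≫ h))
    (hnat₁' : ∀ (X Z Y : C') (x : Z ⟶ X) (f : X ⟶ S'.obj Y) (z : Y ⟶ Z),
        ψ' Z Y (x ≫ f) z = ψ' X Y f (z ≫ x))
    (hnat₂' : ∀ (X Y Z : C') (y : Y ⟶ Z) (f : X ⟶ S'.obj Y) (h : Z ⟶ X),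
        ψ' X Z (f ≫ S'.map y) h = ψ' X Y f (y ≫ h))
    (T : C ⥤ C') [T.Additive] [T.Linear k] [T.IsEquivalence] :
    ∃ κ : S ⋙ T ⟶ T ⋙ S',
      (∀ (Y : C) (f : Y ⟶ S.obj Y),
          ψ' (T.obj Y) (T.obj Y) (T.map f ≫ κ.app Y) (𝟙 (T.obj Y)) = ψ Y Y f (𝟙 Y)) ∧
      (∀ κ' : S ⋙ T ⟶ T ⋙ S',
          (∀ (Y : C) (f : Y ⟶ S.obj Y),
            ψ' (T.obj Y) (T.obj Y) (T.map f ≫ κ'.app Y) (𝟙 (T.obj Y)) = ψ Y Y f (𝟙 Y)) →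
          κ' = κ) ∧
      IsIso κ :=
  rightSerre_linear_commutes_with_equivalence_general k S S' ψ ψ' hnat₁ hnat₂ hnat₁' hnat₂' T
end

section
/- Let (S,ψ) be a right Serre k-functor on C. Then for all objects X, Y and all g : Y ⟶ X, f : X ⟶ S.obj Y one has ψ_{S.obj Y, X}(S.map g)(f) = ψ_{X,Y}(f)(g). If moreover every k-module (Y ⟶ X) is reflexive (Module.IsReflexive k (Y ⟶ X) for all objects X, Y — for instance if k is a field and all hom-spaces are finite dimensional), then S is a fully faithful functor. -/
/-!
Naturality of `ψ` in both variables, applied to identities, gives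
`ψ (S Y) X (S.map g) f = ψ X Y f g`. Read as an identity of maps, this says
`ψ (S Y) X ∘ S.map = ψ_{X,Y}^* ∘ ev`, where `ev` is the evaluation map into the double dual.
Both `ψ`'s are isomorphisms, so `S.map` is bijective exactly when `ev` is, i.e. when the
hom-module is reflexive.
-/

open CategoryTheory

universe w v u

namespace CategoryTheory.RightSerre

variable {k : Type w} [CommRing k] {C : Type u} [Category.{v} C] [Preadditive C]
  [Linear k C] {S : C ⥤ C} (ψ : ∀ X Y : C, (X ⟶ S.obj Y) ≃ₗ[k] Module.Dual k (Y ⟶ X))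

theorem apply_map_apply
    (hnat₁ : ∀ (X Z Y : C) (x : Z ⟶ X) (f : X ⟶ S.obj Y) (z : Y ⟶ Z),
        ψ Z Y (x ≫ f) z = ψ X Y f (z ≫ x))
    (hnat₂ : ∀ (X Y Z : C) (y : Y ⟶ Z) (f : X ⟶ S.obj Y) (h : Z ⟶ X),
        ψ X Z (f ≫ S.map y) h = ψ X Y f (y ≫ h))
    {X Y : C} (g : Y ⟶ X) (f : X ⟶ S.obj Y) :
    ψ (S.obj Y) X (S.map g) f = ψ X Y f g := by
  have h₂ := hnat₂ (S.obj Y) Y X g (𝟙 (S.obj Y)) f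
  have h₁ := hnat₁ (S.obj Y) X Y f (𝟙 (S.obj Y)) g
  simp only [Category.id_comp, Category.comp_id] at h₁ h₂
  rw [h₂, ← h₁]

theorem comp_map_eq_dualMap_comp_eval
    (hmap : ∀ (X Y : C) (g : Y ⟶ X) (f : X ⟶ S.obj Y), ψ (S.obj Y) X (S.map g) f = ψ X Y f g)
    (X Y : C) :
    ψ (S.obj Y) X ∘ (S.map : (Y ⟶ X) → _) = (ψ X Y).dualMap ∘ Module.Dual.eval k (Y ⟶ X) := by
  ext g f
  exact hmap X Y g f

theorem map_bijective_of_isReflexive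
    (hmap : ∀ (X Y : C) (g : Y ⟶ X) (f : X ⟶ S.obj Y), ψ (S.obj Y) X (S.map g) f = ψ X Y f g)
    (X Y : C) [Module.IsReflexive k (Y ⟶ X)] :
    Function.Bijective (S.map : (Y ⟶ X) → _) := by
  rw [← (ψ (S.obj Y) X).bijective.of_comp_iff', comp_map_eq_dualMap_comp_eval ψ hmap]
  exact (ψ X Y).dualMap.bijective.comp (Module.bijective_dual_eval k (Y ⟶ X))

end CategoryTheory.RightSerre

open CategoryTheory.RightSerre in
theorem rightSerre_linear_fully_faithful_general
    (k : Type w) [CommRing k] {C : Type u} [Category.{v} C] [Preadditive C]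
    [CategoryTheory.Linear k C] (S : C ⥤ C)
    (ψ : ∀ X Y : C, (X ⟶ S.obj Y) ≃ₗ[k] Module.Dual k (Y ⟶ X))
    (hnat₁ : ∀ (X Z Y : C) (x : Z ⟶ X) (f : X ⟶ S.obj Y) (z : Y ⟶ Z),
        ψ Z Y (x ≫ f) z = ψ X Y f (z ≫ x))
    (hnat₂ : ∀ (X Y Z : C) (y : Y ⟶ Z) (f : X ⟶ S.obj Y) (h : Z ⟶ X),
        ψ X Z (f ≫ S.map y) h = ψ X Y f (y ≫ h)) :
    (∀ (X Y : C) (g : Y ⟶ X) (f : X ⟶ S.obj Y),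
        ψ (S.obj Y) X (S.map g) f = ψ X Y f g) ∧
      ((∀ X Y : C, Module.IsReflexive k (Y ⟶ X)) → S.Full ∧ S.Faithful) := by
  have hmap := fun (X Y : C) (g : Y ⟶ X) f => apply_map_apply ψ hnat₁ hnat₂ g f
  refine ⟨hmap, fun hrefl => ?_⟩
  obtain ⟨hS⟩ := (Functor.FullyFaithful.nonempty_iff_map_bijective S).2
    fun Y X => map_bijective_of_isReflexive ψ hmap X Y
  exact ⟨hS.full, hS.faithful⟩

/-- Let `(S, ψ)` be a right Serre k-functor on `C`.  Then
`ψ (S Y) X (S.map g) f = ψ X Y f g` for all `g : Y ⟶ X`, `f : X ⟶ S.obj Y`; and if all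
hom-modules `(Y ⟶ X)` are reflexive k-modules, then `S` is fully faithful. -/
theorem rightSerre_linear_fully_faithful
    (k : Type w) [CommRing k] {C : Type u} [Category.{v} C] [Preadditive C]
    [CategoryTheory.Linear k C] (S : C ⥤ C) [S.Additive] [S.Linear k]
    (ψ : ∀ X Y : C, (X ⟶ S.obj Y) ≃ₗ[k] Module.Dual k (Y ⟶ X))
    (hnat₁ : ∀ (X Z Y : C) (x : Z ⟶ X) (f : X ⟶ S.obj Y) (z : Y ⟶ Z),
        ψ Z Y (x ≫ f) z = ψ X Y f (z ≫ x))
    (hnat₂ : ∀ (X Y Z : C) (y : Y ⟶ Z) (f : X ⟶ S.obj Y) (h : Z ⟶ X),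
        ψ X Z (f ≫ S.map y) h = ψ X Y f (y ≫ h)) :
    (∀ (X Y : C) (g : Y ⟶ X) (f : X ⟶ S.obj Y),
        ψ (S.obj Y) X (S.map g) f = ψ X Y f g) ∧
      ((∀ X Y : C, Module.IsReflexive k (Y ⟶ X)) → S.Full ∧ S.Faithful) :=
  rightSerre_linear_fully_faithful_general k S ψ hnat₁ hnat₂
end
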